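/- arXiv:math/0508565 — 16 statements merged into one kernel-verified Lean document; each statement's English description precedes it below -/
import Mathlib

section
/- Let A be an abelian category and let f : A ⟶ B, g : A ⟶ C, h : B ⟶ D, k : C ⟶ D form a commutative quadrangle (f ≫ h = g ≫ k). Then the quadrangle is a weak square if and only if the induced morphism on kernels kernel g ⟶ kernel h is an epimorphism and the induced morphism on cokernels cokernel g ⟶ cokernel h is a monomorphism. -/
open CategoryTheory CategoryTheory.Limits

/-- A commutative quadrangle `(f, g, h, k)` (with `f ≫ h = g ≫ k`) in an abelian category is a
*weak square* if its diagonal sequence `A ⟶ B ⊞ C ⟶ D`, with first morphism `biprod.lift f g`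
and second morphism `biprod.desc h (-k)`, is exact at `B ⊞ C`. -/
def IsWeakSquare {A : Type*} [Category A] [Abelian A] {W X Y Z : A}
    (f : W ⟶ X) (g : W ⟶ Y) (h : X ⟶ Z) (k : Y ⟶ Z) : Prop :=
  ∃ w : biprod.lift f g ≫ biprod.desc h (-k) = 0,
    (ShortComplex.mk (biprod.lift f g) (biprod.desc h (-k)) w).Exact

/-!
Arguing with generalized elements up to epimorphic refinements, exactness of the diagonal
sequence says that every pair `x : T ⟶ X`, `y : T ⟶ Y` with `x ≫ h = y ≫ k` comes locally from
some `a : T ⟶ W`. Pairs `(x, 0)` with `x` in `kernel h` give surjectivity of the kernel map, and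
pairs `(x, y)` with `y ≫ k` killed by `cokernel.π h` give injectivity of the cokernel map.
Conversely, injectivity on cokernels makes `y` locally of the form `a ≫ g`; the defect
`x - a ≫ f` then lies in `kernel h`, and surjectivity on kernels lets us correct `a` by an
element of `kernel g`.
-/

section

variable {C : Type*} [Category C] [Abelian C] {W X Y Z : C}
  {f : W ⟶ X} {g : W ⟶ Y} {h : X ⟶ Z} {k : Y ⟶ Z}

def IsWeakPullbackUpToRefinements (f : W ⟶ X) (g : W ⟶ Y) (h : X ⟶ Z) (k : Y ⟶ Z) : Prop :=
  ∀ ⦃T : C⦄ (x : T ⟶ X) (y : T ⟶ Y), x ≫ h = y ≫ k →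
    ∃ (T' : C) (π : T' ⟶ T) (_ : Epi π) (a : T' ⟶ W), π ≫ x = a ≫ f ∧ π ≫ y = a ≫ g

lemma biprod_lift_comp_desc_neg_eq_zero_iff {T : C} (x : T ⟶ X) (y : T ⟶ Y) :
    biprod.lift x y ≫ biprod.desc h (-k) = 0 ↔ x ≫ h = y ≫ k := by
  rw [biprod.lift_desc, Preadditive.comp_neg, ← sub_eq_add_neg, sub_eq_zero]

lemma isWeakSquare_iff_isWeakPullbackUpToRefinements (comm : f ≫ h = g ≫ k) :
    IsWeakSquare f g h k ↔ IsWeakPullbackUpToRefinements f g h k := by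
  refine ⟨fun ⟨_, hS⟩ => ?_, fun H => ⟨(biprod_lift_comp_desc_neg_eq_zero_iff f g).2 comm, ?_⟩⟩
  · intro T x y hxy
    obtain ⟨T', π, hπ, a, fac⟩ := hS.exact_up_to_refinements (biprod.lift x y)
      ((biprod_lift_comp_desc_neg_eq_zero_iff x y).2 hxy)
    exact ⟨T', π, hπ, a, by simpa using fac =≫ biprod.fst, by simpa using fac =≫ biprod.snd⟩
  · rw [ShortComplex.exact_iff_exact_up_to_refinements]
    intro T z hz
    obtain ⟨x, y, rfl⟩ : ∃ x y, z = biprod.lift x y :=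
      ⟨z ≫ biprod.fst, z ≫ biprod.snd, by ext <;> simp⟩
    obtain ⟨T', π, hπ, a, hx, hy⟩ := H x y ((biprod_lift_comp_desc_neg_eq_zero_iff x y).1 hz)
    exact ⟨T', π, hπ, a, by ext <;> simp [hx, hy]⟩

namespace IsWeakPullbackUpToRefinements

lemma epi_kernel_map (H : IsWeakPullbackUpToRefinements f g h k) (comm : f ≫ h = g ≫ k) :
    Epi (kernel.map g h f k comm.symm) := by
  rw [epi_iff_surjective_up_to_refinements]
  intro T y
  obtain ⟨T', π, hπ, a, hx, hy⟩ := H (y ≫ kernel.ι h) 0 (by simp)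
  have ha : a ≫ g = 0 := by simpa using hy.symm
  refine ⟨T', π, hπ, kernel.lift g a ha, ?_⟩
  rw [← cancel_mono (kernel.ι h)]
  simp [hx]

lemma mono_cokernel_map (H : IsWeakPullbackUpToRefinements f g h k) (comm : f ≫ h = g ≫ k) :
    Mono (cokernel.map g h f k comm.symm) := by
  rw [Preadditive.mono_iff_cancel_zero]
  intro T t ht
  obtain ⟨T₁, π₁, hπ₁, y, hy⟩ := surjective_up_to_refinements_of_epi (cokernel.π g) t
  have hyk : (y ≫ k) ≫ cokernel.π h = 0 := by
    simpa [ht] using (hy =≫ cokernel.map g h f k comm.symm).symm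
  obtain ⟨T₂, π₂, hπ₂, x, hx⟩ :=
    (CokernelCofork.IsColimit.comp_π_eq_zero_iff_up_to_refinements (cokernelIsCokernel h) _).1 hyk
  obtain ⟨T₃, π₃, hπ₃, a, -, ha⟩ := H x (π₂ ≫ y) (by simpa using hx.symm)
  have : (π₃ ≫ π₂ ≫ π₁) ≫ t = 0 := by
    simp [hy, reassoc_of% ha]
  exact zero_of_epi_comp _ this

lemma of_epi_kernel_map_of_mono_cokernel_map
    (comm : f ≫ h = g ≫ k) [Epi (kernel.map g h f k comm.symm)]
    [Mono (cokernel.map g h f k comm.symm)] :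
    IsWeakPullbackUpToRefinements f g h k := by
  intro T x y hxy
  have hy : y ≫ cokernel.π g = 0 := by
    rw [← cancel_mono (cokernel.map g h f k comm.symm)]
    simp [← reassoc_of% hxy]
  obtain ⟨T₁, π₁, hπ₁, a, ha⟩ :=
    (CokernelCofork.IsColimit.comp_π_eq_zero_iff_up_to_refinements (cokernelIsCokernel g) _).1 hy
  have hdefect : (π₁ ≫ x - a ≫ f) ≫ h = 0 := by
    simp [hxy, comm, reassoc_of% ha]
  obtain ⟨T₂, π₂, hπ₂, v, hv⟩ :=
    surjective_up_to_refinements_of_epi (kernel.map g h f k comm.symm) (kernel.lift h _ hdefect)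
  have hvf : π₂ ≫ π₁ ≫ x = π₂ ≫ a ≫ f + v ≫ kernel.ι g ≫ f := by
    have := hv =≫ kernel.ι h
    simp only [Category.assoc, kernel.lift_ι, Preadditive.comp_sub] at this
    rw [← this]
    abel
  refine ⟨T₂, π₂ ≫ π₁, inferInstance, π₂ ≫ a + v ≫ kernel.ι g, ?_, ?_⟩
  · simpa using hvf
  · simp [ha]

end IsWeakPullbackUpToRefinements

end

/-- A commutative quadrangle is a weak square if and only if the induced morphism on kernels
`kernel g ⟶ kernel h` is an epimorphism and the induced morphism on cokernels
`cokernel g ⟶ cokernel h` is a monomorphism. -/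
theorem weakSquare_iff_epi_kernelMap_and_mono_cokernelMap
    {A : Type*} [Category A] [Abelian A] {W X Y Z : A}
    (f : W ⟶ X) (g : W ⟶ Y) (h : X ⟶ Z) (k : Y ⟶ Z) (comm : f ≫ h = g ≫ k) :
    IsWeakSquare f g h k ↔
      (Epi (kernel.lift h (kernel.ι g ≫ f)
          (by rw [Category.assoc, comm, ← Category.assoc, kernel.condition, zero_comp])) ∧
       Mono (cokernel.desc g (k ≫ cokernel.π h)
          (by rw [← Category.assoc, ← comm, Category.assoc, cokernel.condition, comp_zero]))) := by
  rw [isWeakSquare_iff_isWeakPullbackUpToRefinements comm]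
  exact ⟨fun H => ⟨H.epi_kernel_map comm, H.mono_cokernel_map comm⟩,
    fun ⟨_, _⟩ => .of_epi_kernel_map_of_mono_cokernel_map comm⟩
end

section
/- Let A be an abelian category and let f : A ⟶ B, g : A ⟶ C, h : B ⟶ D, k : C ⟶ D form a commutative quadrangle (f ≫ h = g ≫ k). Then the quadrangle is a pullback if and only if the induced morphism on kernels kernel g ⟶ kernel h is an isomorphism and the induced morphism on cokernels cokernel g ⟶ cokernel h is a monomorphism. -/
open CategoryTheory CategoryTheory.Limits

/-- A commutative quadrangle is a *pullback* if it is a weak square and the first morphism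
`biprod.lift f g` of its diagonal sequence is a monomorphism. -/
def IsPullbackSquare {A : Type*} [Category A] [Abelian A] {W X Y Z : A}
    (f : W ⟶ X) (g : W ⟶ Y) (h : X ⟶ Z) (k : Y ⟶ Z) : Prop :=
  IsWeakSquare f g h k ∧ Mono (biprod.lift f g)

/-!
A square `(t, l, r, b)` is a pullback iff its diagonal sequence `0 ⟶ X₁ ⟶ X₂ ⊞ X₃ ⟶ X₄` is
exact, and a pullback induces an isomorphism on kernels and a mono on cokernels. For the converse
we argue with elements up to refinements. A morphism into `X₁` killed by `t` and `l` lives in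
`kernel t` and is killed by the kernel map, so that map being mono makes `X₁ ⟶ X₂ ⊞ X₃` mono.
For exactness, let `(x₂, x₃)` satisfy `x₂ ≫ r = x₃ ≫ b`. The class of `x₂` in `cokernel t` maps
to the class of `x₃ ≫ b = 0`, so the cokernel map being mono gives `x₂ = a ≫ t`; then
`x₃ - a ≫ l` lies in `kernel b`, and lifting it along the epic kernel map to `c` in `kernel t`
turns `a` into the common preimage `a + c ≫ kernel.ι t`.
-/

section

open Category

variable {C : Type*} [Category C] [Abelian C]
  {X₁ X₂ X₃ X₄ : C} {t : X₁ ⟶ X₂} {l : X₁ ⟶ X₃} {r : X₂ ⟶ X₄} {b : X₃ ⟶ X₄}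

namespace CategoryTheory.CommSq

lemma isPullback_of_exact_shortComplex' (sq : CommSq t l r b) (hS : sq.shortComplex'.Exact)
    [Mono (biprod.lift t l)] : IsPullback t l r b :=
  have : Mono sq.shortComplex'.f := ‹_›
  .of_isLimit' sq (sq.isLimitEquivIsLimitKernelFork.symm hS.fIsKernel)

lemma mono_biprod_lift_of_mono_kernel_map (sq : CommSq t l r b)
    [Mono (kernel.map t b l r sq.w)] : Mono (biprod.lift t l) := by
  rw [Preadditive.mono_iff_cancel_zero]
  intro T x hx
  have ht : x ≫ t = 0 := by simpa using hx =≫ biprod.fst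
  have hl : x ≫ l = 0 := by simpa using hx =≫ biprod.snd
  have : kernel.lift t x ht ≫ kernel.map t b l r sq.w = 0 := by
    ext
    simp [hl]
  rw [← kernel.lift_ι t x ht, zero_of_comp_mono _ this, zero_comp]

lemma exists_lift_up_to_refinements (sq : CommSq t l r b)
    [Epi (kernel.map t b l r sq.w)] [Mono (cokernel.map t b l r sq.w)]
    {T : C} (x₂ : T ⟶ X₂) (x₃ : T ⟶ X₃) (w : x₂ ≫ r = x₃ ≫ b) :
    ∃ (T' : C) (π : T' ⟶ T) (_ : Epi π) (x₁ : T' ⟶ X₁),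
      π ≫ x₂ = x₁ ≫ t ∧ π ≫ x₃ = x₁ ≫ l := by
  have hx₂ : x₂ ≫ cokernel.π t = 0 := by
    refine zero_of_comp_mono (cokernel.map t b l r sq.w) ?_
    simp [reassoc_of% w]
  obtain ⟨T₁, π₁, _, a, ha⟩ : ∃ (T₁ : C) (π₁ : T₁ ⟶ T) (_ : Epi π₁) (a : T₁ ⟶ X₁),
      π₁ ≫ x₂ = a ≫ t :=
    ((ShortComplex.mk _ _ (cokernel.condition t)).exact_of_g_is_cokernel
      (cokernelIsCokernel t)).exact_up_to_refinements x₂ hx₂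
  have hy : (π₁ ≫ x₃ - a ≫ l) ≫ b = 0 := by
    simp [← w, reassoc_of% ha, ← sq.w]
  obtain ⟨T₂, π₂, _, c, hc⟩ :=
    surjective_up_to_refinements_of_epi (kernel.map t b l r sq.w) (kernel.lift b _ hy)
  refine ⟨T₂, π₂ ≫ π₁, inferInstance, π₂ ≫ a + c ≫ kernel.ι t, ?_, ?_⟩
  · simp [ha]
  · have hcι := hc =≫ kernel.ι b
    simp only [assoc, kernel.lift_ι, Preadditive.comp_sub] at hcι
    rw [Preadditive.add_comp, assoc, assoc, assoc, ← hcι, add_sub_cancel]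

lemma exact_shortComplex'_of_epi_kernel_map_of_mono_cokernel_map (sq : CommSq t l r b)
    [Epi (kernel.map t b l r sq.w)] [Mono (cokernel.map t b l r sq.w)] :
    sq.shortComplex'.Exact := by
  rw [ShortComplex.exact_iff_exact_up_to_refinements]
  intro T (x : T ⟶ X₂ ⊞ X₃) (hx : x ≫ biprod.desc r (-b) = 0)
  obtain ⟨T', π, _, x₁, h₂, h₃⟩ := sq.exists_lift_up_to_refinements (x ≫ biprod.fst)
    (x ≫ biprod.snd) (by simpa [biprod.desc_eq, ← sub_eq_add_neg, sub_eq_zero] using hx)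
  refine ⟨T', π, inferInstance, x₁, ?_⟩
  change π ≫ x = x₁ ≫ biprod.lift t l
  ext <;> simp [h₂, h₃]

lemma isPullback_iff_isIso_kernel_map_and_mono_cokernel_map (sq : CommSq t l r b) :
    IsPullback t l r b ↔
      IsIso (kernel.map t b l r sq.w) ∧ Mono (cokernel.map t b l r sq.w) := by
  refine ⟨fun h ↦ ⟨isIso_kernel_map_of_isPullback h, Abelian.mono_cokernel_map_of_isPullback h⟩,
    fun ⟨_, _⟩ ↦ ?_⟩
  have := sq.mono_biprod_lift_of_mono_kernel_map
  exact sq.isPullback_of_exact_shortComplex'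
    sq.exact_shortComplex'_of_epi_kernel_map_of_mono_cokernel_map

end CategoryTheory.CommSq

lemma isPullbackSquare_iff_isPullback (w : t ≫ r = l ≫ b) :
    IsPullbackSquare t l r b ↔ IsPullback t l r b := by
  refine ⟨fun ⟨⟨_, hS⟩, _⟩ ↦ CommSq.isPullback_of_exact_shortComplex' ⟨w⟩ hS, fun sq ↦ ?_⟩
  exact ⟨⟨_, sq.exact_shortComplex'⟩, sq.mono_shortComplex'_f⟩

end

/-- A commutative quadrangle is a pullback if and only if the induced morphism on kernels
`kernel g ⟶ kernel h` is an isomorphism and the induced morphism on cokernels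
`cokernel g ⟶ cokernel h` is a monomorphism. -/
theorem pullback_iff_isIso_kernelMap_and_mono_cokernelMap
    {A : Type*} [Category A] [Abelian A] {W X Y Z : A}
    (f : W ⟶ X) (g : W ⟶ Y) (h : X ⟶ Z) (k : Y ⟶ Z) (comm : f ≫ h = g ≫ k) :
    IsPullbackSquare f g h k ↔
      (IsIso (kernel.lift h (kernel.ι g ≫ f)
          (by rw [Category.assoc, comm, ← Category.assoc, kernel.condition, zero_comp])) ∧
       Mono (cokernel.desc g (k ≫ cokernel.π h)
          (by rw [← Category.assoc, ← comm, Category.assoc, cokernel.condition, comp_zero]))) := by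
  rw [isPullbackSquare_iff_isPullback comm, IsPullback.flip_iff]
  exact CommSq.isPullback_iff_isIso_kernel_map_and_mono_cokernel_map ⟨comm.symm⟩
end

section
/- Let A be an abelian category and let f : A ⟶ B, g : A ⟶ C, h : B ⟶ D, k : C ⟶ D form a commutative quadrangle (f ≫ h = g ≫ k). Then the quadrangle is a pushout if and only if the induced morphism on kernels kernel g ⟶ kernel h is an epimorphism and the induced morphism on cokernels cokernel g ⟶ cokernel h is an isomorphism. -/
/-!
The diagonal sequence `A ⟶ B ⊞ C ⟶ D` is the mapping cone of the morphism of two-term complexes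
`(f, k) : (g : A ⟶ C) ⟶ (h : B ⟶ D)`, so its homology sits in the long exact sequence
`ker g ⟶ ker h ⟶ H(B ⊞ C) ⟶ coker g ⟶ coker h ⟶ coker (biprod.desc h (-k)) ⟶ 0`.
Hence exactness at `B ⊞ C` means that the kernel map is epi and the cokernel map is mono, and
epimorphy of the diagonal means that the cokernel map is epi. Up to the sign of the summand `C`,
the diagonal sequence is the cokernel presentation of a pushout, and the two directions are
checked by chasing with refinements.
-/

open CategoryTheory CategoryTheory.Limits

/-- A commutative quadrangle is a *pushout* if it is a weak square and the second morphism
`biprod.desc h (-k)` of its diagonal sequence is an epimorphism. -/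
def IsPushoutSquare {A : Type*} [Category A] [Abelian A] {W X Y Z : A}
    (f : W ⟶ X) (g : W ⟶ Y) (h : X ⟶ Z) (k : Y ⟶ Z) : Prop :=
  IsWeakSquare f g h k ∧ Epi (biprod.desc h (-k))

namespace CategoryTheory

variable {C : Type*} [Category C] {X₁ X₂ X₃ X₄ : C}
  {t : X₁ ⟶ X₂} {l : X₁ ⟶ X₃} {r : X₂ ⟶ X₄} {b : X₃ ⟶ X₄}

lemma CommSq.exact_and_epi_shortComplex'_iff [Preadditive C] [HasBinaryBiproduct X₂ X₃]
    (sq : CommSq t l r b) :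
    sq.shortComplex'.Exact ∧ Epi sq.shortComplex'.g ↔
      sq.shortComplex.Exact ∧ Epi sq.shortComplex.g :=
  ShortComplex.exact_and_epi_g_iff_of_iso <|
    ShortComplex.isoMk (Iso.refl _) (biprod.mapIso (Iso.refl _) (-Iso.refl _)) (Iso.refl _)
      (by dsimp [CommSq.shortComplex', CommSq.shortComplex]; ext <;> simp)
      (by dsimp [CommSq.shortComplex', CommSq.shortComplex]; ext <;> simp)

variable [Abelian C]

lemma CommSq.isPushout_iff_exact_and_epi (sq : CommSq t l r b) :
    IsPushout t l r b ↔ sq.shortComplex.Exact ∧ Epi sq.shortComplex.g := by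
  rw [ShortComplex.exact_and_epi_g_iff_g_is_cokernel]
  exact ⟨fun h => ⟨h.isColimitCokernelCofork⟩,
    fun ⟨h⟩ => .of_isColimit' sq (sq.isColimitEquivIsColimitCokernelCofork.symm h)⟩

namespace Abelian

lemma epi_biprod_desc_of_epi_cokernel_map (sq : CommSq t l r b)
    [Epi (cokernel.map _ _ _ _ sq.w)] : Epi (biprod.desc r b) := by
  have : Epi (r ≫ cokernel.π b) := by
    rw [← cokernel.π_desc t (r ≫ cokernel.π b) (by simp [reassoc_of% sq.w])]
    infer_instance
  rw [epi_iff_surjective_up_to_refinements]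
  intro T z
  obtain ⟨T₁, π₁, _, x₂, hx₂⟩ :=
    surjective_up_to_refinements_of_epi (r ≫ cokernel.π b) (z ≫ cokernel.π b)
  have exact_b : (ShortComplex.mk _ _ (cokernel.condition b)).Exact :=
    ShortComplex.cokernelSequence_exact b
  obtain ⟨T₂, π₂, _, x₃, hx₃⟩ := exact_b.exact_up_to_refinements (π₁ ≫ z - x₂ ≫ r)
    (by simp only [Preadditive.sub_comp, Category.assoc, hx₂, sub_self])
  refine ⟨T₂, π₂ ≫ π₁, inferInstance, biprod.lift (π₂ ≫ x₂) x₃, ?_⟩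
  rw [biprod.lift_desc, Category.assoc, ← hx₃, Preadditive.comp_sub, Category.assoc]
  abel

lemma exists_lift_up_to_refinements_of_mono_cokernel_map (sq : CommSq t l r b)
    [Mono (cokernel.map _ _ _ _ sq.w)] {T : C} (x₂ : T ⟶ X₂) (x₃ : T ⟶ X₃)
    (hx : x₂ ≫ r = x₃ ≫ b) :
    ∃ (T' : C) (π : T' ⟶ T) (_ : Epi π) (x₁ : T' ⟶ X₁), π ≫ x₂ = x₁ ≫ t := by
  have hx₂ : x₂ ≫ cokernel.π t = 0 :=
    zero_of_comp_mono (cokernel.map _ _ _ _ sq.w) (by simp [reassoc_of% hx])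
  exact (ShortComplex.cokernelSequence_exact t).exact_up_to_refinements x₂ hx₂

lemma exact_shortComplex_of_epi_kernel_map_of_mono_cokernel_map (sq : CommSq t l r b)
    [Epi (kernel.map _ _ _ _ sq.w)] [Mono (cokernel.map _ _ _ _ sq.w)] :
    sq.shortComplex.Exact := by
  rw [ShortComplex.exact_iff_exact_up_to_refinements]
  change ∀ ⦃T : C⦄ (e : T ⟶ X₂ ⊞ X₃), e ≫ biprod.desc r b = 0 →
    ∃ (T' : C) (π : T' ⟶ T) (_ : Epi π) (u : T' ⟶ X₁), π ≫ e = u ≫ biprod.lift t (-l)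
  intro T e he
  have he' : (e ≫ biprod.fst) ≫ r + (e ≫ biprod.snd) ≫ b = 0 := by
    simpa [biprod.desc_eq] using he
  obtain ⟨T₁, π₁, _, w, hw⟩ := exists_lift_up_to_refinements_of_mono_cokernel_map sq
    (e ≫ biprod.fst) (-(e ≫ biprod.snd)) (by rwa [Preadditive.neg_comp, eq_neg_iff_add_eq_zero])
  have hker : (π₁ ≫ e ≫ biprod.snd + w ≫ l) ≫ b = 0 := calc
    _ = π₁ ≫ ((e ≫ biprod.fst) ≫ r + (e ≫ biprod.snd) ≫ b) := by
      simp only [Preadditive.add_comp, Preadditive.comp_add, Category.assoc, ← sq.w,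
        ← reassoc_of% hw]
      exact add_comm _ _
    _ = 0 := by rw [he', comp_zero]
  obtain ⟨T₂, π₂, _, a, ha⟩ := surjective_up_to_refinements_of_epi
    (kernel.map _ _ _ _ sq.w) (kernel.lift b _ hker)
  have ha' := ha =≫ kernel.ι b
  simp only [Category.assoc, kernel.lift_ι] at ha'
  refine ⟨T₂, π₂ ≫ π₁, inferInstance, π₂ ≫ w - a ≫ kernel.ι t, ?_⟩
  apply biprod.hom_ext
  · simp [hw]
  · simp only [Category.assoc, biprod.lift_snd, Preadditive.comp_neg, Preadditive.sub_comp]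
    rw [← ha', Preadditive.comp_add]
    abel

lemma isPushout_iff_epi_kernel_map_and_isIso_cokernel_map (sq : CommSq t l r b) :
    IsPushout t l r b ↔
      Epi (kernel.map _ _ _ _ sq.w) ∧ IsIso (cokernel.map _ _ _ _ sq.w) := by
  refine ⟨fun h => ⟨epi_kernel_map_of_isPushout h, isIso_cokernel_map_of_isPushout h⟩, ?_⟩
  rintro ⟨_, _⟩
  have := epi_biprod_desc_of_epi_cokernel_map sq
  exact sq.isPushout_iff_exact_and_epi.2
    ⟨exact_shortComplex_of_epi_kernel_map_of_mono_cokernel_map sq, this⟩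

end Abelian

end CategoryTheory

lemma isPushoutSquare_iff_isPushout {A : Type*} [Category A] [Abelian A] {W X Y Z : A}
    {f : W ⟶ X} {g : W ⟶ Y} {h : X ⟶ Z} {k : Y ⟶ Z} (sq : CommSq f g h k) :
    IsPushoutSquare f g h k ↔ IsPushout f g h k := by
  rw [sq.isPushout_iff_exact_and_epi, ← sq.exact_and_epi_shortComplex'_iff]
  exact ⟨fun ⟨⟨_, hex⟩, hepi⟩ => ⟨hex, hepi⟩, fun ⟨hex, hepi⟩ => ⟨⟨_, hex⟩, hepi⟩⟩

/-- A commutative quadrangle is a pushout if and only if the induced morphism on kernels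
`kernel g ⟶ kernel h` is an epimorphism and the induced morphism on cokernels
`cokernel g ⟶ cokernel h` is an isomorphism. -/
theorem pushout_iff_epi_kernelMap_and_isIso_cokernelMap
    {A : Type*} [Category A] [Abelian A] {W X Y Z : A}
    (f : W ⟶ X) (g : W ⟶ Y) (h : X ⟶ Z) (k : Y ⟶ Z) (comm : f ≫ h = g ≫ k) :
    IsPushoutSquare f g h k ↔
      (Epi (kernel.lift h (kernel.ι g ≫ f)
          (by rw [Category.assoc, comm, ← Category.assoc, kernel.condition, zero_comp])) ∧
       IsIso (cokernel.desc g (k ≫ cokernel.π h)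
          (by rw [← Category.assoc, ← comm, Category.assoc, cokernel.condition, comp_zero]))) := by
  rw [isPushoutSquare_iff_isPushout ⟨comm⟩, IsPushout.flip_iff]
  exact Abelian.isPushout_iff_epi_kernel_map_and_isIso_cokernel_map ⟨comm.symm⟩
end

section
/- Let A be an abelian category and let f : A ⟶ B, g : A ⟶ C, h : B ⟶ D, k : C ⟶ D form a commutative quadrangle (f ≫ h = g ≫ k). Then the quadrangle is a square (its diagonal sequence is short exact) if and only if the induced morphism on kernels kernel g ⟶ kernel h is an isomorphism and the induced morphism on cokernels cokernel g ⟶ cokernel h is an isomorphism. -/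
open CategoryTheory CategoryTheory.Limits

/-- A commutative quadrangle is a *square* if its diagonal sequence is short exact:
`biprod.lift f g` is a monomorphism, `biprod.desc h (-k)` is an epimorphism,
and the sequence is exact at `B ⊞ C`. -/
def IsSquareQuad {A : Type*} [Category A] [Abelian A] {W X Y Z : A}
    (f : W ⟶ X) (g : W ⟶ Y) (h : X ⟶ Z) (k : Y ⟶ Z) : Prop :=
  IsWeakSquare f g h k ∧ Mono (biprod.lift f g) ∧ Epi (biprod.desc h (-k))

namespace SquareAux

open CategoryTheory.Abelian CategoryTheory.Abelian.Pseudoelement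

variable {A : Type*} [Category A] [Abelian A] {W X Y Z : A}
variable {f : W ⟶ X} {g : W ⟶ Y} {h : X ⟶ Z} {k : Y ⟶ Z}
variable {κ : kernel g ⟶ kernel h} {δ : cokernel g ⟶ cokernel h}

section Mor

theorem mono_kappa_of_mono_lift (hκ : κ ≫ kernel.ι h = kernel.ι g ≫ f) (hm : Mono (biprod.lift f g)) : Mono κ := by
  rw [Preadditive.mono_iff_cancel_zero]
  intro T u hu
  have h1 : u ≫ kernel.ι g ≫ f = 0 := by
    rw [← hκ, ← Category.assoc, hu, zero_comp]
  have h2 : (u ≫ kernel.ι g) ≫ biprod.lift f g = 0 := by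
    apply biprod.hom_ext <;>
      simp only [Category.assoc, biprod.lift_fst, biprod.lift_snd, zero_comp]
    · exact h1
    · rw [kernel.condition, comp_zero]
  have h3 : u ≫ kernel.ι g = 0 := zero_of_comp_mono _ h2
  exact zero_of_comp_mono _ h3

theorem mono_lift_of_mono_kappa (hκ : κ ≫ kernel.ι h = kernel.ι g ≫ f) (hm : Mono κ) : Mono (biprod.lift f g) := by
  rw [Preadditive.mono_iff_cancel_zero]
  intro T u hu
  have hf : u ≫ f = 0 := by
    have := hu =≫ biprod.fst; simpa using this
  have hg : u ≫ g = 0 := by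
    have := hu =≫ biprod.snd; simpa using this
  have hv : kernel.lift g u hg ≫ κ = 0 := by
    apply zero_of_comp_mono (kernel.ι h)
    rw [Category.assoc, hκ, ← Category.assoc, kernel.lift_ι, hf]
  have : kernel.lift g u hg = 0 := by
    rw [← cancel_mono κ, hv, zero_comp]
  calc u = kernel.lift g u hg ≫ kernel.ι g := (kernel.lift_ι _ _ _).symm
    _ = 0 := by rw [this, zero_comp]

theorem epi_delta_of_epi_desc (hδ : cokernel.π g ≫ δ = k ≫ cokernel.π h) (he : Epi (biprod.desc h (-k))) : Epi δ := by
  rw [Preadditive.epi_iff_cancel_zero]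
  intro T u hu
  have h1 : k ≫ cokernel.π h ≫ u = 0 := by
    rw [← Category.assoc, ← hδ, Category.assoc, hu, comp_zero]
  have h2 : biprod.desc h (-k) ≫ cokernel.π h ≫ u = 0 := by
    apply biprod.hom_ext' <;>
      simp only [← Category.assoc, biprod.inl_desc, biprod.inr_desc, comp_zero]
    · rw [Category.assoc, ← Category.assoc, cokernel.condition, zero_comp]
    · simp [Preadditive.neg_comp, Category.assoc, h1]

  have h3 : cokernel.π h ≫ u = 0 := zero_of_epi_comp _ h2
  exact zero_of_epi_comp _ h3

theorem epi_desc_of_epi_delta (hδ : cokernel.π g ≫ δ = k ≫ cokernel.π h) (he : Epi δ) : Epi (biprod.desc h (-k)) := by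
  rw [Preadditive.epi_iff_cancel_zero]
  intro T u hu
  have hh : h ≫ u = 0 := by
    have := biprod.inl ≫= hu; simpa using this
  have hk : k ≫ u = 0 := by
    have := biprod.inr ≫= hu
    simp only [← Category.assoc, biprod.inr_desc, comp_zero] at this
    rw [Preadditive.neg_comp, neg_eq_zero] at this
    exact this
  have hv : δ ≫ cokernel.desc h u hh = 0 := by
    apply zero_of_epi_comp (cokernel.π g)
    rw [← Category.assoc, hδ, Category.assoc, cokernel.π_desc, hk]
  have : cokernel.desc h u hh = 0 := by
    rw [← cancel_epi δ, hv, comp_zero]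
  calc u = cokernel.π h ≫ cokernel.desc h u hh := (cokernel.π_desc _ _ _).symm
    _ = 0 := by rw [this, comp_zero]

end Mor

section Pseudo

open CategoryTheory.Abelian.Pseudoelement

theorem epi_kappa_of_exact (hκ : κ ≫ kernel.ι h = kernel.ι g ≫ f)
    {w : biprod.lift f g ≫ biprod.desc h (-k) = 0}
    (hS : (ShortComplex.mk (biprod.lift f g) (biprod.desc h (-k)) w).Exact) : Epi κ := by
  apply epi_of_pseudo_surjective
  intro t
  let m : kernel h ⟶ X ⊞ Y := biprod.lift (kernel.ι h) 0
  have hmD : m ≫ biprod.desc h (-k) = 0 := by simp [m]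
  have hz : pseudoApply (biprod.desc h (-k)) (pseudoApply m t) = 0 := by
    rw [← Pseudoelement.comp_apply, hmD, Pseudoelement.zero_apply]
  obtain ⟨a, ha⟩ := pseudo_exact_of_exact hS (pseudoApply m t) hz
  have hga : pseudoApply g a = 0 := by
    calc pseudoApply g a = pseudoApply (biprod.lift f g ≫ biprod.snd) a := by
          rw [biprod.lift_snd]
      _ = pseudoApply biprod.snd (pseudoApply (biprod.lift f g) a) := Pseudoelement.comp_apply _ _ _
      _ = pseudoApply biprod.snd (pseudoApply m t) := by rw [ha]
      _ = pseudoApply (m ≫ biprod.snd) t := (Pseudoelement.comp_apply _ _ _).symm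
      _ = 0 := by rw [show m ≫ biprod.snd = 0 by simp [m]]; exact zero_apply _ _
  obtain ⟨b, hb⟩ := pseudo_exact_of_exact (ShortComplex.exact_kernel g) a hga
  refine ⟨b, pseudo_injective_of_mono (kernel.ι h) ?_⟩
  calc pseudoApply (kernel.ι h) (pseudoApply κ b)
      = pseudoApply (κ ≫ kernel.ι h) b := (Pseudoelement.comp_apply _ _ _).symm
    _ = pseudoApply (kernel.ι g ≫ f) b := by rw [hκ]
    _ = pseudoApply f (pseudoApply (kernel.ι g) b) := Pseudoelement.comp_apply _ _ _
    _ = pseudoApply f a := by rw [hb]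
    _ = pseudoApply (biprod.lift f g ≫ biprod.fst) a := by rw [biprod.lift_fst]
    _ = pseudoApply biprod.fst (pseudoApply (biprod.lift f g) a) := Pseudoelement.comp_apply _ _ _
    _ = pseudoApply biprod.fst (pseudoApply m t) := by rw [ha]
    _ = pseudoApply (m ≫ biprod.fst) t := (Pseudoelement.comp_apply _ _ _).symm
    _ = pseudoApply (kernel.ι h) t := by rw [show m ≫ biprod.fst = kernel.ι h by simp [m]]

theorem mono_delta_of_exact (hδ : cokernel.π g ≫ δ = k ≫ cokernel.π h)
    {w : biprod.lift f g ≫ biprod.desc h (-k) = 0}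
    (hS : (ShortComplex.mk (biprod.lift f g) (biprod.desc h (-k)) w).Exact) : Mono δ := by
  apply mono_of_zero_of_map_zero
  intro t ht
  obtain ⟨y, hy⟩ := pseudo_surjective_of_epi (cokernel.π g) t
  have h1 : pseudoApply (cokernel.π h) (pseudoApply k y) = 0 := by
    calc pseudoApply (cokernel.π h) (pseudoApply k y)
        = pseudoApply (k ≫ cokernel.π h) y := (Pseudoelement.comp_apply _ _ _).symm
      _ = pseudoApply (cokernel.π g ≫ δ) y := by rw [hδ]
      _ = pseudoApply δ (pseudoApply (cokernel.π g) y) := Pseudoelement.comp_apply _ _ _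
      _ = pseudoApply δ t := by rw [hy]
      _ = 0 := ht
  obtain ⟨x, hx⟩ := pseudo_exact_of_exact (ShortComplex.exact_cokernel h) (pseudoApply k y) h1
  obtain ⟨s, hs1, hs2⟩ := pseudo_pullback hx
  let φ : pullback h k ⟶ X ⊞ Y := biprod.lift (pullback.fst h k) (pullback.snd h k)
  have hφ : φ ≫ biprod.desc h (-k) = 0 := by
    simp [φ, biprod.lift_desc, pullback.condition]
  have hz : pseudoApply (biprod.desc h (-k)) (pseudoApply φ s) = 0 := by
    rw [← Pseudoelement.comp_apply, hφ, Pseudoelement.zero_apply]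
  obtain ⟨a, ha⟩ := pseudo_exact_of_exact hS (pseudoApply φ s) hz
  have hga : pseudoApply g a = y := by
    calc pseudoApply g a = pseudoApply (biprod.lift f g ≫ biprod.snd) a := by
          rw [biprod.lift_snd]
      _ = pseudoApply biprod.snd (pseudoApply (biprod.lift f g) a) := Pseudoelement.comp_apply _ _ _
      _ = pseudoApply biprod.snd (pseudoApply φ s) := by rw [ha]
      _ = pseudoApply (φ ≫ biprod.snd) s := (Pseudoelement.comp_apply _ _ _).symm
      _ = pseudoApply (pullback.snd h k) s := by
          rw [show φ ≫ biprod.snd = pullback.snd h k by simp [φ]]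
      _ = y := hs2
  calc t = pseudoApply (cokernel.π g) y := hy.symm
    _ = pseudoApply (cokernel.π g) (pseudoApply g a) := by rw [hga]
    _ = pseudoApply (g ≫ cokernel.π g) a := (Pseudoelement.comp_apply _ _ _).symm
    _ = 0 := by rw [cokernel.condition]; exact zero_apply _ _

end Pseudo

theorem exact_of_epi_kappa_of_mono_delta
    (hκ : κ ≫ kernel.ι h = kernel.ι g ≫ f)
    (hδ : cokernel.π g ≫ δ = k ≫ cokernel.π h)
    (hκe : Epi κ) (hδm : Mono δ)
    (w : biprod.lift f g ≫ biprod.desc h (-k) = 0) :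
    (ShortComplex.mk (biprod.lift f g) (biprod.desc h (-k)) w).Exact := by
  rw [ShortComplex.exact_iff_kernel_ι_comp_cokernel_π_zero]
  dsimp only
  have hDeq : biprod.desc h (-k) = biprod.fst ≫ h - biprod.snd ≫ k := by
    apply biprod.hom_ext' <;> simp
  set ι := kernel.ι (biprod.desc h (-k)) with hιdef
  have hc2 : ι ≫ (biprod.fst ≫ h - biprod.snd ≫ k) = 0 := by
    rw [← hDeq]
    exact kernel.condition _
  have hxy : (ι ≫ biprod.fst) ≫ h = (ι ≫ biprod.snd) ≫ k := by
    rw [Preadditive.comp_sub, ← Category.assoc, ← Category.assoc, sub_eq_zero] at hc2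
    exact hc2
  have hy0 : (ι ≫ biprod.snd) ≫ cokernel.π g = 0 := by
    apply zero_of_comp_mono δ
    rw [Category.assoc, Category.assoc, hδ, ← Category.assoc, ← Category.assoc, ← hxy,
      Category.assoc, Category.assoc, cokernel.condition, comp_zero, comp_zero]
  set v := kernel.lift (cokernel.π g) (ι ≫ biprod.snd) hy0 with hvdef
  set p₁ := pullback.fst (Abelian.factorThruImage g) v with hp₁def
  set p₂ := pullback.snd (Abelian.factorThruImage g) v with hp₂def
  have hpy : p₂ ≫ (ι ≫ biprod.snd) = p₁ ≫ g := by
    have e : v ≫ kernel.ι (cokernel.π g) = ι ≫ biprod.snd := kernel.lift_ι _ _ _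
    calc p₂ ≫ ι ≫ biprod.snd = p₂ ≫ v ≫ kernel.ι (cokernel.π g) :=
          congrArg (fun m => p₂ ≫ m) e.symm
      _ = (p₂ ≫ v) ≫ kernel.ι (cokernel.π g) := by rw [Category.assoc]
      _ = (p₁ ≫ Abelian.factorThruImage g) ≫ kernel.ι (cokernel.π g) := by
          rw [← pullback.condition]
      _ = p₁ ≫ g := by rw [Category.assoc]; exact congrArg _ (Abelian.image.fac g)
  set r := p₂ ≫ ι - p₁ ≫ biprod.lift f g with hrdef
  have hr_snd : r ≫ biprod.snd = 0 := by
    rw [hrdef, Preadditive.sub_comp, Category.assoc, Category.assoc, biprod.lift_snd,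
      sub_eq_zero, ← Category.assoc]
    rw [Category.assoc]
    exact hpy
  have hr_D : r ≫ biprod.desc h (-k) = 0 := by
    rw [hrdef, Preadditive.sub_comp, Category.assoc, Category.assoc, kernel.condition, w,
      comp_zero, comp_zero, sub_zero]
  have hξh : (r ≫ biprod.fst) ≫ h = 0 := by
    have h2 : r ≫ (biprod.fst ≫ h - biprod.snd ≫ k) = 0 := by
      rw [← hDeq]
      exact hr_D
    rw [Preadditive.comp_sub, ← Category.assoc, ← Category.assoc, hr_snd, zero_comp,
      sub_zero] at h2
    exact h2
  set t := kernel.lift h (r ≫ biprod.fst) hξh with htdef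
  have ht : t ≫ kernel.ι h = r ≫ biprod.fst := kernel.lift_ι _ _ _
  have hr_eq : r = (t ≫ kernel.ι h) ≫ biprod.inl := by
    rw [ht]
    apply biprod.hom_ext
    · simp
    · simp [hr_snd]
  set q₁ := pullback.fst κ t with hq₁def
  set q₂ := pullback.snd κ t with hq₂def
  have hιgL : kernel.ι g ≫ biprod.lift f g = kernel.ι g ≫ f ≫ biprod.inl := by
    rw [biprod.lift_eq, Preadditive.comp_add, kernel.condition_assoc, zero_comp, add_zero]
  have hq2r : q₂ ≫ r = (q₁ ≫ kernel.ι g) ≫ biprod.lift f g := by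
    calc q₂ ≫ r = q₂ ≫ (t ≫ kernel.ι h) ≫ biprod.inl := by rw [← hr_eq]
      _ = (q₂ ≫ t) ≫ kernel.ι h ≫ biprod.inl := by simp only [Category.assoc]
      _ = (q₁ ≫ κ) ≫ kernel.ι h ≫ biprod.inl := by rw [pullback.condition]
      _ = q₁ ≫ (κ ≫ kernel.ι h) ≫ biprod.inl := by simp only [Category.assoc]
      _ = q₁ ≫ (kernel.ι g ≫ f) ≫ biprod.inl := by rw [hκ]
      _ = q₁ ≫ kernel.ι g ≫ f ≫ biprod.inl := by simp only [Category.assoc]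
      _ = q₁ ≫ kernel.ι g ≫ biprod.lift f g := by rw [← hιgL]
      _ = (q₁ ≫ kernel.ι g) ≫ biprod.lift f g := by simp only [Category.assoc]
  have key : (q₂ ≫ p₂) ≫ ι = (q₁ ≫ kernel.ι g + q₂ ≫ p₁) ≫ biprod.lift f g := by
    have h3 : q₂ ≫ p₂ ≫ ι = q₂ ≫ r + (q₂ ≫ p₁) ≫ biprod.lift f g := by
      rw [hrdef, Preadditive.comp_sub]
      simp only [Category.assoc]
      abel
    rw [Category.assoc, h3, hq2r, Preadditive.add_comp]
  have hepi2 : Epi p₂ := by rw [hp₂def]; infer_instance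
  have hepiq2 : Epi q₂ := by rw [hq₂def]; exact inferInstance
  have hepi : Epi (q₂ ≫ p₂) := epi_comp _ _
  apply zero_of_epi_comp (q₂ ≫ p₂)
  rw [← Category.assoc, key, Category.assoc, cokernel.condition, comp_zero]

end SquareAux

theorem square_iff_isIso_kernelMap_and_isIso_cokernelMap'
    {A : Type*} [Category A] [Abelian A] {W X Y Z : A}
    (f : W ⟶ X) (g : W ⟶ Y) (h : X ⟶ Z) (k : Y ⟶ Z) (comm : f ≫ h = g ≫ k) :
    (∃ w : biprod.lift f g ≫ biprod.desc h (-k) = 0,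
        (ShortComplex.mk (biprod.lift f g) (biprod.desc h (-k)) w).Exact)
      ∧ Mono (biprod.lift f g) ∧ Epi (biprod.desc h (-k)) ↔
      (IsIso (kernel.lift h (kernel.ι g ≫ f)
          (by rw [Category.assoc, comm, ← Category.assoc, kernel.condition, zero_comp])) ∧
       IsIso (cokernel.desc g (k ≫ cokernel.π h)
          (by rw [← Category.assoc, ← comm, Category.assoc, cokernel.condition, comp_zero]))) := by
  have hκ : kernel.lift h (kernel.ι g ≫ f)
      (by rw [Category.assoc, comm, ← Category.assoc, kernel.condition, zero_comp]) ≫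
        kernel.ι h = kernel.ι g ≫ f := kernel.lift_ι _ _ _
  have hδ : cokernel.π g ≫ cokernel.desc g (k ≫ cokernel.π h)
      (by rw [← Category.assoc, ← comm, Category.assoc, cokernel.condition, comp_zero]) =
        k ≫ cokernel.π h := cokernel.π_desc _ _ _
  constructor
  · rintro ⟨⟨w, hex⟩, hm, he⟩
    constructor
    · have h1 := SquareAux.mono_kappa_of_mono_lift hκ hm
      have h2 := SquareAux.epi_kappa_of_exact hκ hex
      exact isIso_of_mono_of_epi _
    · have h1 := SquareAux.epi_delta_of_epi_desc hδ he
      have h2 := SquareAux.mono_delta_of_exact hδ hex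
      exact isIso_of_mono_of_epi _
  · rintro ⟨h1, h2⟩
    have w : biprod.lift f g ≫ biprod.desc h (-k) = 0 := by
      simp [biprod.lift_desc, comm]
    refine ⟨⟨w, ?_⟩, ?_, ?_⟩
    · exact SquareAux.exact_of_epi_kappa_of_mono_delta hκ hδ inferInstance inferInstance w
    · exact SquareAux.mono_lift_of_mono_kappa hκ inferInstance
    · exact SquareAux.epi_desc_of_epi_delta hδ inferInstance


/-- A commutative quadrangle is a square (its diagonal sequence is short exact) if and only if
the induced morphism on kernels `kernel g ⟶ kernel h` is an isomorphism and the induced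
morphism on cokernels `cokernel g ⟶ cokernel h` is an isomorphism. -/
theorem square_iff_isIso_kernelMap_and_isIso_cokernelMap
    {A : Type*} [Category A] [Abelian A] {W X Y Z : A}
    (f : W ⟶ X) (g : W ⟶ Y) (h : X ⟶ Z) (k : Y ⟶ Z) (comm : f ≫ h = g ≫ k) :
    IsSquareQuad f g h k ↔
      (IsIso (kernel.lift h (kernel.ι g ≫ f)
          (by rw [Category.assoc, comm, ← Category.assoc, kernel.condition, zero_comp])) ∧
       IsIso (cokernel.desc g (k ≫ cokernel.π h)
          (by rw [← Category.assoc, ← comm, Category.assoc, cokernel.condition, comp_zero]))) := by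
  exact square_iff_isIso_kernelMap_and_isIso_cokernelMap' f g h k comm
end

section
/- Let A be an abelian category. Suppose given morphisms f₁ : X ⟶ Y, f₂ : Y ⟶ Z, x : X ⟶ X', y : Y ⟶ Y', z : Z ⟶ Z', f₁' : X' ⟶ Y', f₂' : Y' ⟶ Z' with f₁ ≫ y = x ≫ f₁' and f₂ ≫ z = y ≫ f₂'. If the quadrangle (f₁, x, y, f₁') is a weak square and the quadrangle (f₂, y, z, f₂') is a weak square, then the composite quadrangle (f₁ ≫ f₂, x, z, f₁' ≫ f₂') is a weak square. -/
/-!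
Read through refinements (pseudo-elements), a quadrangle `(f, g, h, k)` is a weak square iff it
commutes and every pair `(b, c)` with `b ≫ h = c ≫ k` lifts, after an epimorphic refinement of its
source, to a morphism `a` into the corner with `a ≫ f = b` and `a ≫ g = c`. For the composite
quadrangle, lift a pair `(c, d)` with `c ≫ z = d ≫ f₁' ≫ f₂'` first through the right square
(using the pair `(c, d ≫ f₁')`) and then the resulting pair through the left square; the
composite of the two refinements is again an epimorphism.
-/

open CategoryTheory CategoryTheory.Limits

namespace IsWeakSquare

variable {A : Type*} [Category A] [Abelian A] {W X Y Z : A}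
  {f : W ⟶ X} {g : W ⟶ Y} {h : X ⟶ Z} {k : Y ⟶ Z}

theorem comm (hw : IsWeakSquare f g h k) : f ≫ h = g ≫ k := by
  obtain ⟨w, -⟩ := hw
  simpa [← sub_eq_add_neg, sub_eq_zero] using w

theorem exists_lift (hw : IsWeakSquare f g h k) {T : A} (b : T ⟶ X) (c : T ⟶ Y)
    (hbc : b ≫ h = c ≫ k) :
    ∃ (T' : A) (π : T' ⟶ T) (_ : Epi π) (a : T' ⟶ W), π ≫ b = a ≫ f ∧ π ≫ c = a ≫ g := by
  obtain ⟨w, hex⟩ := hw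
  obtain ⟨T', π, hπ, a, ha⟩ :=
    hex.exact_up_to_refinements (biprod.lift b c) (by simp [hbc])
  exact ⟨T', π, hπ, a, by simpa using ha =≫ biprod.fst, by simpa using ha =≫ biprod.snd⟩

theorem of_exists_lift (hcomm : f ≫ h = g ≫ k)
    (hlift : ∀ ⦃T : A⦄ (b : T ⟶ X) (c : T ⟶ Y), b ≫ h = c ≫ k →
      ∃ (T' : A) (π : T' ⟶ T) (_ : Epi π) (a : T' ⟶ W), π ≫ b = a ≫ f ∧ π ≫ c = a ≫ g) :
    IsWeakSquare f g h k := by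
  refine ⟨by simp [hcomm], ?_⟩
  rw [ShortComplex.exact_iff_exact_up_to_refinements]
  intro T t ht
  have hsplit : t = biprod.lift (t ≫ biprod.fst) (t ≫ biprod.snd) := by
    apply biprod.hom_ext <;> simp
  obtain ⟨T', π, hπ, a, hb, hc⟩ := hlift (t ≫ biprod.fst) (t ≫ biprod.snd) (by
    rw [hsplit] at ht
    simpa [← sub_eq_add_neg, sub_eq_zero] using ht)
  refine ⟨T', π, hπ, a, ?_⟩
  apply biprod.hom_ext <;> simp [hb, hc]

end IsWeakSquare

theorem isWeakSquare_comp_general {A : Type*} [Category A] [Abelian A]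
    {X Y Z X' Y' Z' : A}
    (f₁ : X ⟶ Y) (f₂ : Y ⟶ Z) (x : X ⟶ X') (y : Y ⟶ Y') (z : Z ⟶ Z')
    (f₁' : X' ⟶ Y') (f₂' : Y' ⟶ Z')
    (h₁ : IsWeakSquare f₁ x y f₁') (h₂ : IsWeakSquare f₂ y z f₂') :
    IsWeakSquare (f₁ ≫ f₂) x z (f₁' ≫ f₂') := by
  refine .of_exists_lift (by rw [Category.assoc, h₂.comm, reassoc_of% h₁.comm]) ?_
  intro T c d hcd
  obtain ⟨T₁, π₁, _, b, hb₁, hb₂⟩ := h₂.exists_lift c (d ≫ f₁') (by rw [hcd, Category.assoc])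
  obtain ⟨T₂, π₂, _, a, ha₁, ha₂⟩ := h₁.exists_lift b (π₁ ≫ d) (by rw [← hb₂, Category.assoc])
  refine ⟨T₂, π₂ ≫ π₁, epi_comp _ _, a, ?_, by rw [Category.assoc, ha₂]⟩
  rw [Category.assoc, hb₁, reassoc_of% ha₁]

/-- If the two quadrangles `(f₁, x, y, f₁')` and `(f₂, y, z, f₂')` are weak squares, then so is
the composite quadrangle `(f₁ ≫ f₂, x, z, f₁' ≫ f₂')`. -/
theorem isWeakSquare_comp {A : Type*} [Category A] [Abelian A]
    {X Y Z X' Y' Z' : A}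
    (f₁ : X ⟶ Y) (f₂ : Y ⟶ Z) (x : X ⟶ X') (y : Y ⟶ Y') (z : Z ⟶ Z')
    (f₁' : X' ⟶ Y') (f₂' : Y' ⟶ Z')
    (comm₁ : f₁ ≫ y = x ≫ f₁') (comm₂ : f₂ ≫ z = y ≫ f₂')
    (h₁ : IsWeakSquare f₁ x y f₁') (h₂ : IsWeakSquare f₂ y z f₂') :
    IsWeakSquare (f₁ ≫ f₂) x z (f₁' ≫ f₂') :=
  isWeakSquare_comp_general f₁ f₂ x y z f₁' f₂' h₁ h₂
end

section
/- Let A be an abelian category and let f : A ⟶ B, g : A ⟶ C, h : B ⟶ D, k : C ⟶ D form a commutative quadrangle (f ≫ h = g ≫ k). If f is an epimorphism and k is a monomorphism, then the quadrangle is a weak square. -/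
open CategoryTheory CategoryTheory.Limits

/-!
Given `x = (b, c) : T ⟶ B ⊞ C` with `b ≫ h = c ≫ k`, surjectivity of `f` up to refinements
writes `π ≫ b = a ≫ f` for an epimorphism `π`. Then `a ≫ g` and `π ≫ c` agree after composing
with `k`, since both give `π ≫ b ≫ h`, so `k` being a monomorphism yields `π ≫ x = a ≫ (f, g)`.
-/

namespace CategoryTheory.Limits.biprod

variable {C : Type*} [Category C] [Preadditive C] {X Y Z : C} [HasBinaryBiproduct X Y]

lemma comp_desc_neg_eq_zero_iff {T : C} (x : T ⟶ X ⊞ Y) (h : X ⟶ Z) (k : Y ⟶ Z) :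
    x ≫ desc h (-k) = 0 ↔ x ≫ fst ≫ h = x ≫ snd ≫ k := by
  simp only [desc_eq, Preadditive.comp_add, Preadditive.comp_neg, add_neg_eq_zero]

lemma lift_comp_desc_neg_eq_zero_iff {W : C} (f : W ⟶ X) (g : W ⟶ Y) (h : X ⟶ Z) (k : Y ⟶ Z) :
    lift f g ≫ desc h (-k) = 0 ↔ f ≫ h = g ≫ k := by
  rw [comp_desc_neg_eq_zero_iff, lift_fst_assoc, lift_snd_assoc]

lemma hom_ext_of_comp_desc_neg_eq_zero {T : C} {h : X ⟶ Z} {k : Y ⟶ Z} [Mono k]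
    {x y : T ⟶ X ⊞ Y} (hx : x ≫ desc h (-k) = 0) (hy : y ≫ desc h (-k) = 0)
    (hfst : x ≫ fst = y ≫ fst) : x = y := by
  refine hom_ext _ _ hfst ((cancel_mono k).1 ?_)
  rw [comp_desc_neg_eq_zero_iff] at hx hy
  simp only [Category.assoc, ← hx, ← hy, reassoc_of% hfst]

end CategoryTheory.Limits.biprod

open biprod in
/-- A commutative quadrangle whose first morphism `f` is an epimorphism and whose fourth
morphism `k` is a monomorphism is a weak square. -/
theorem isWeakSquare_of_epi_of_mono {A : Type*} [Category A] [Abelian A]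
    {W X Y Z : A} (f : W ⟶ X) (g : W ⟶ Y) (h : X ⟶ Z) (k : Y ⟶ Z)
    (comm : f ≫ h = g ≫ k) (hf : Epi f) (hk : Mono k) :
    IsWeakSquare f g h k := by
  have hzero := (lift_comp_desc_neg_eq_zero_iff f g h k).2 comm
  refine ⟨hzero, (ShortComplex.exact_iff_exact_up_to_refinements _).2 fun T x hx ↦ ?_⟩
  obtain ⟨T', π, hπ, a, ha⟩ := surjective_up_to_refinements_of_epi f (x ≫ fst)
  refine ⟨T', π, hπ, a, hom_ext_of_comp_desc_neg_eq_zero (h := h) (k := k) ?_ ?_ ?_⟩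
  · simp only [Category.assoc, hx, Limits.comp_zero]
  · simp only [Category.assoc, hzero, Limits.comp_zero]
  · simpa only [Category.assoc, lift_fst] using ha
end

section
/- Let A be an abelian category. Suppose given morphisms u : X ⟶ Y, v : Y ⟶ Z, y : Y ⟶ Y', z : Z ⟶ Z', u' : Y' ⟶ Z', v' : Z' ⟶ W' with v ≫ z = y ≫ u', u ≫ y = 0 and z ≫ v' = 0. If the pair (u ≫ v, z) is exact at Z and the pair (y, u' ≫ v') is exact at Y', then the quadrangle (v, y, z, u') is a weak square. -/
/-!
Elements are chased up to refinements. Given a pair `(b, c)` with `b ≫ z = c ≫ u'`, the element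
`c` is killed by `u' ≫ v'`, since `c ≫ u' ≫ v' = b ≫ z ≫ v' = 0`; so locally `c = y₁ ≫ y`. Then
`b - y₁ ≫ v` is killed by `z`, so locally `b - y₁ ≫ v = x ≫ u ≫ v`, and `y₁ + x ≫ u` is a
preimage of `(b, c)` in `Y`, because `u ≫ y = 0`.
-/

open CategoryTheory CategoryTheory.Limits

section

variable {A : Type*} [Category A] [Abelian A] {W X Y Z : A}

lemma biprod_lift_comp_desc_neg_eq_zero {T : A} {f : T ⟶ X} {g : T ⟶ Y} {h : X ⟶ Z}
    {k : Y ⟶ Z} (comm : f ≫ h = g ≫ k) : biprod.lift f g ≫ biprod.desc h (-k) = 0 := by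
  rw [biprod.lift_desc, Preadditive.comp_neg, comm, add_neg_cancel]

lemma comp_fst_comp_eq_comp_snd_comp_of_comp_desc_neg_eq_zero {T : A} {t : T ⟶ X ⊞ Y}
    {h : X ⟶ Z} {k : Y ⟶ Z} (ht : t ≫ biprod.desc h (-k) = 0) :
    (t ≫ biprod.fst) ≫ h = (t ≫ biprod.snd) ≫ k := by
  rw [biprod.desc_eq, Preadditive.comp_add, Preadditive.comp_neg, Preadditive.comp_neg,
    ← sub_eq_add_neg, sub_eq_zero] at ht
  simpa only [Category.assoc] using ht

lemma isWeakSquare_of_exists_lift {f : W ⟶ X} {g : W ⟶ Y} {h : X ⟶ Z} {k : Y ⟶ Z}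
    (comm : f ≫ h = g ≫ k)
    (lift : ∀ ⦃T : A⦄ (b : T ⟶ X) (c : T ⟶ Y), b ≫ h = c ≫ k →
      ∃ (T' : A) (π : T' ⟶ T) (_ : Epi π) (a : T' ⟶ W), a ≫ f = π ≫ b ∧ a ≫ g = π ≫ c) :
    IsWeakSquare f g h k := by
  refine ⟨biprod_lift_comp_desc_neg_eq_zero comm, ?_⟩
  rw [ShortComplex.exact_iff_exact_up_to_refinements]
  intro T t ht
  obtain ⟨T', π, hπ, a, hb, hc⟩ :=
    lift _ _ (comp_fst_comp_eq_comp_snd_comp_of_comp_desc_neg_eq_zero ht)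
  exact ⟨T', π, hπ, a, by ext <;> simp [hb, hc]⟩

end

/-- If `(u ≫ v, z)` is exact at `Z` and `(y, u' ≫ v')` is exact at `Y'`, then the quadrangle
`(v, y, z, u')` is a weak square. -/
theorem isWeakSquare_of_exact_outer {A : Type*} [Category A] [Abelian A]
    {X Y Z Y' Z' W' : A}
    (u : X ⟶ Y) (v : Y ⟶ Z) (y : Y ⟶ Y') (z : Z ⟶ Z') (u' : Y' ⟶ Z') (v' : Z' ⟶ W')
    (comm : v ≫ z = y ≫ u') (hu : u ≫ y = 0) (hz : z ≫ v' = 0)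
    (h₁ : (ShortComplex.mk (u ≫ v) z
        (by rw [Category.assoc, comm, ← Category.assoc, hu, zero_comp])).Exact)
    (h₂ : (ShortComplex.mk y (u' ≫ v')
        (by rw [← Category.assoc, ← comm, Category.assoc, hz, comp_zero])).Exact) :
    IsWeakSquare v y z u' := by
  refine isWeakSquare_of_exists_lift comm fun T b c hbc => ?_
  obtain ⟨T₁, π₁, _, y₁, hy₁⟩ := h₂.exact_up_to_refinements c (by
    simp only [← Category.assoc, ← hbc]
    simp [hz])
  obtain ⟨T₂, π₂, _, x, hx⟩ := h₁.exact_up_to_refinements (π₁ ≫ b - y₁ ≫ v) (by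
    dsimp at hy₁ ⊢
    rw [Preadditive.sub_comp, sub_eq_zero, Category.assoc, hbc, ← Category.assoc, hy₁,
      Category.assoc, Category.assoc, comm])
  dsimp at hy₁ hx
  refine ⟨T₂, π₂ ≫ π₁, epi_comp _ _, π₂ ≫ y₁ + x ≫ u, ?_, ?_⟩
  · simp only [Preadditive.add_comp, Category.assoc, ← hx, Preadditive.comp_sub]
    abel
  · simp only [Preadditive.add_comp, Category.assoc, hu, comp_zero, add_zero, hy₁]
end

section
/- Let A be an abelian category. Suppose the quadrangle (f : X ⟶ Y, x : X ⟶ X', y : Y ⟶ Y', f' : X' ⟶ Y') with f ≫ y = x ≫ f' is a weak square, and suppose that the object X' is both injective and projective. If the image objects of f : X ⟶ Y, of x : X ⟶ X', and of y : Y ⟶ Y' are each both injective and projective, then the image object of f' : X' ⟶ Y' and the image object of x ≫ f' : X ⟶ Y' are both injective and projective as well. -/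
open CategoryTheory CategoryTheory.Limits

/-!
Exactness of the diagonal sequence at `Y ⊞ X'` gives `ker y ≤ im f` and `ker f' ≤ im x`. Both
images are injective, hence direct summands, of `Y` and of `X'` respectively.

Since `ker y` lies in the summand `im f`, the projection `Y → im f` followed by `y` descends to
`im y` and splits `im (f ≫ y) ↪ im y`; so `im (x ≫ f') = im (f ≫ y)` is a retract of `im y`.
Since `ker f'` lies in the summand `im x`, with projection `r : X' → im x`, both components of
`v ↦ (f' (r v), v - r v) : X' → im (x ≫ f') ⊞ X'` descend to `im f'`, making `im f'` a retract
of `im (x ≫ f') ⊞ X'`, a sum of two objects that are injective and projective.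
-/

namespace CategoryTheory

variable {C : Type*} [Category C]

noncomputable def Injective.retractOfMono {X Y : C} [Injective X] (i : X ⟶ Y) [Mono i] :
    Retract X Y where
  i := i
  r := Injective.factorThru (𝟙 X) i
  retract := Injective.comp_factorThru _ _

lemma Retract.r_comp_i_of_factors {S Y : C} (s : Retract S Y) {T : C} (u : T ⟶ Y)
    (hl : ∃ l : T ⟶ S, l ≫ s.i = u) : u ≫ s.r ≫ s.i = u := by
  obtain ⟨l, rfl⟩ := hl
  simp

lemma kernel_ι_factorThruImage_comp [HasZeroMorphisms C] {Y Y' : C} (y : Y ⟶ Y') [HasImage y]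
    [HasKernel (factorThruImage y)] : kernel.ι (factorThruImage y) ≫ y = 0 := by
  simpa using kernel.condition_assoc (factorThruImage y) (image.ι y)

variable [Abelian C]

noncomputable def image.compIsoImageιComp {X Y Z : C} (f : X ⟶ Y) (g : Y ⟶ Z) :
    image (f ≫ g) ≅ image (image.ι f ≫ g) :=
  have := isIso_of_mono_of_epi (image.preComp (factorThruImage f) (image.ι f ≫ g))
  image.eqToIso (image.fac_assoc f g).symm ≪≫
    asIso (image.preComp (factorThruImage f) (image.ι f ≫ g))

lemma ShortComplex.Exact.exists_lift_image_comp {S : ShortComplex C} (hS : S.Exact) {W B : C}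
    (v : W ⟶ S.X₂) (hv : v ≫ S.g = 0) (p : S.X₂ ⟶ B) :
    ∃ l : W ⟶ image (S.f ≫ p), l ≫ image.ι (S.f ≫ p) = v ≫ p := by
  have := hS.epi_kernelLift
  rw [← kernel.lift_ι_assoc S.g S.f S.zero p]
  have := isIso_of_mono_of_epi (image.preComp (kernel.lift S.g S.f S.zero) (kernel.ι S.g ≫ p))
  have hι : inv (image.preComp (kernel.lift S.g S.f S.zero) (kernel.ι S.g ≫ p)) ≫
      image.ι (kernel.lift S.g S.f S.zero ≫ kernel.ι S.g ≫ p) = image.ι (kernel.ι S.g ≫ p) := by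
    rw [IsIso.inv_comp_eq, image.preComp_ι]
  exact ⟨kernel.lift S.g v hv ≫ factorThruImage _ ≫ inv (image.preComp _ _), by simp [hι]⟩

namespace Retract

variable {S Y Y' : C}

lemma r_comp_factorThruImage_eq_zero (s : Retract S Y) (y : Y ⟶ Y') {T : C} (u : T ⟶ Y)
    (hu : u ≫ y = 0) (hl : ∃ l : T ⟶ S, l ≫ s.i = u) :
    u ≫ s.r ≫ factorThruImage (s.i ≫ y) = 0 := by
  obtain ⟨l, rfl⟩ := hl
  rw [← cancel_mono (image.ι (s.i ≫ y))]
  simpa using hu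

noncomputable def imageComp (s : Retract S Y) (y : Y ⟶ Y')
    (hker : ∀ ⦃T : C⦄ (u : T ⟶ Y), u ≫ y = 0 → ∃ l : T ⟶ S, l ≫ s.i = u) :
    Retract (image (s.i ≫ y)) (image y) where
  i := image.preComp s.i y
  r := Abelian.epiDesc (factorThruImage y) (s.r ≫ factorThruImage (s.i ≫ y))
    (s.r_comp_factorThruImage_eq_zero y _ (kernel_ι_factorThruImage_comp y)
      (hker _ (kernel_ι_factorThruImage_comp y)))
  retract := by
    rw [← cancel_epi (factorThruImage (s.i ≫ y))]
    simp

noncomputable def imageBiprod (s : Retract S Y) (y : Y ⟶ Y')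
    (hker : ∀ ⦃T : C⦄ (u : T ⟶ Y), u ≫ y = 0 → ∃ l : T ⟶ S, l ≫ s.i = u) :
    Retract (image y) (image (s.i ≫ y) ⊞ Y) where
  i := biprod.lift (s.imageComp y hker).r
    (Abelian.epiDesc (factorThruImage y) (𝟙 Y - s.r ≫ s.i)
      (by rw [Preadditive.comp_sub, Category.comp_id, s.r_comp_i_of_factors _
            (hker _ (kernel_ι_factorThruImage_comp y)), sub_self]))
  r := biprod.desc (image.preComp s.i y) (factorThruImage y)
  retract := by
    rw [← cancel_epi (factorThruImage y)]
    simp [imageComp]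

end Retract

end CategoryTheory

section IsWeakSquare

variable {A : Type*} [Category A] [Abelian A] {W X Y Z : A}
  {f : W ⟶ X} {g : W ⟶ Y} {h : X ⟶ Z} {k : Y ⟶ Z}

lemma IsWeakSquare.kernel_le_image_left (ws : IsWeakSquare f g h k)
    ⦃T : A⦄ (u : T ⟶ X) (hu : u ≫ h = 0) : ∃ l : T ⟶ image f, l ≫ image.ι f = u := by
  obtain ⟨_, hS⟩ := ws
  have := hS.exists_lift_image_comp (u ≫ biprod.inl) (by simpa using hu) biprod.fst
  rw [biprod.lift_fst] at this
  simpa using this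

lemma IsWeakSquare.kernel_le_image_right (ws : IsWeakSquare f g h k)
    ⦃T : A⦄ (u : T ⟶ Y) (hu : u ≫ k = 0) : ∃ l : T ⟶ image g, l ≫ image.ι g = u := by
  obtain ⟨_, hS⟩ := ws
  have := hS.exists_lift_image_comp (u ≫ biprod.inr) (by simpa using hu) biprod.snd
  rw [biprod.lift_snd] at this
  simpa using this

end IsWeakSquare

/-- Given a weak square `(f, x, y, f')` with `X'` both injective and projective, if the images
of `f`, `x` and `y` are each both injective and projective, then so are the image of `f'` and
the image of `x ≫ f'`. -/
theorem bijective_images_of_weakSquare {A : Type*} [Category A] [Abelian A]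
    {X Y X' Y' : A} (f : X ⟶ Y) (x : X ⟶ X') (y : Y ⟶ Y') (f' : X' ⟶ Y')
    (comm : f ≫ y = x ≫ f') (ws : IsWeakSquare f x y f')
    (hX' : Injective X' ∧ Projective X')
    (hf : Injective (image f) ∧ Projective (image f))
    (hx : Injective (image x) ∧ Projective (image x))
    (hy : Injective (image y) ∧ Projective (image y)) :
    (Injective (image f') ∧ Projective (image f')) ∧
      (Injective (image (x ≫ f')) ∧ Projective (image (x ≫ f'))) := by
  obtain ⟨_, _⟩ := hX'
  obtain ⟨_, -⟩ := hf
  obtain ⟨_, -⟩ := hx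
  obtain ⟨_, _⟩ := hy
  have hxf' : Injective (image (x ≫ f')) ∧ Projective (image (x ≫ f')) := by
    rw [← comm]
    let ρ := (Retract.ofIso (image.compIsoImageιComp f y)).trans
      ((Injective.retractOfMono (image.ι f)).imageComp y ws.kernel_le_image_left)
    exact ⟨ρ.injective, ρ.projective⟩
  have := hxf'.1
  have := hxf'.2
  let σ := Retract.ofIso (image.compIsoImageιComp x f').symm
  have := σ.injective
  have := σ.projective
  let ρ : Retract (image f') (image (image.ι x ≫ f') ⊞ X') :=
    (Injective.retractOfMono (image.ι x)).imageBiprod f' ws.kernel_le_image_right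
  exact ⟨⟨ρ.injective, ρ.projective⟩, hxf'⟩
end

section
/- Let A be an abelian category. Suppose given a pullback square consisting of x : X' ⟶ X, f' : X' ⟶ Y', f : X ⟶ Y, y : Y' ⟶ Y with f' ≫ y = x ≫ f (i.e., IsPullback for this square), where x is a monomorphism and Y' is injective. Then for every r : X ⟶ X' with x ≫ r = 𝟙 X', there exists s : Y ⟶ Y' such that y ≫ s = 𝟙 Y' and f ≫ s = r ≫ f'. In other words, any retraction of x extends to a retraction of the morphism (x, y) in the arrow category. -/
open CategoryTheory CategoryTheory.Limits

/-- Given a pullback square `(x : X' ⟶ X, f' : X' ⟶ Y', f : X ⟶ Y, y : Y' ⟶ Y)` in an abelian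
category, with `x` a monomorphism and `Y'` injective, any retraction `r` of `x` extends to a
retraction of the morphism `(x, y)` in the arrow category: there is `s : Y ⟶ Y'` with
`y ≫ s = 𝟙 Y'` and `f ≫ s = r ≫ f'`. -/
theorem retraction_extends_of_pullback {A : Type*} [Category A] [Abelian A]
    {X X' Y Y' : A} (x : X' ⟶ X) (f' : X' ⟶ Y') (f : X ⟶ Y) (y : Y' ⟶ Y)
    (pb : IsPullback x f' f y) (hx : Mono x) (hY' : Injective Y')
    (r : X ⟶ X') (hr : x ≫ r = 𝟙 X') :
    ∃ s : Y ⟶ Y', y ≫ s = 𝟙 Y' ∧ f ≫ s = r ≫ f' := by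
  -- p : X ⊞ Y' ⟶ Y, u : X ⊞ Y' ⟶ Y'
  set p : X ⊞ Y' ⟶ Y := biprod.desc f (-y) with hp
  set k : X' ⟶ X ⊞ Y' := biprod.lift x f' with hk
  have hkp : k ≫ p = 0 := by
    simp [hk, hp, pb.w]
  set u : X ⊞ Y' ⟶ Y' := biprod.desc (r ≫ f') (-(𝟙 Y')) with hu
  have hku : k ≫ u = 0 := by
    simp [hk, hu, reassoc_of% hr]
  -- kernel.ι p factors through k, since the square is a pullback
  have hpdec : p = biprod.fst ≫ f - biprod.snd ≫ y := by
    apply biprod.hom_ext' <;> simp [hp]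
  have hcomm : (kernel.ι p ≫ biprod.fst) ≫ f = (kernel.ι p ≫ biprod.snd) ≫ y := by
    have h : kernel.ι p ≫ (biprod.fst ≫ f - biprod.snd ≫ y) = 0 := by
      rw [← hpdec]; exact kernel.condition p
    rw [← sub_eq_zero]
    simpa [Preadditive.comp_sub] using h
  obtain ⟨l, hl1, hl2⟩ : { l : kernel p ⟶ X' // l ≫ pb.cone.fst = _ ∧ l ≫ pb.cone.snd = _ } :=
    PullbackCone.IsLimit.lift' pb.isLimit _ _ hcomm
  rw [IsPullback.cone_fst] at hl1
  rw [IsPullback.cone_snd] at hl2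
  have hlk : l ≫ k = kernel.ι p := by
    apply biprod.hom_ext <;> simp [hk, hl1, hl2]
  have hιu : kernel.ι p ≫ u = 0 := by
    rw [← hlk, Category.assoc, hku, comp_zero]
  -- factor u through the coimage of p
  set w : Abelian.coimage p ⟶ Y' := cokernel.desc (kernel.ι p) u hιu with hw
  have hπw : Abelian.coimage.π p ≫ w = u := cokernel.π_desc _ _ _
  haveI : Mono (Abelian.factorThruCoimage p) := inferInstance
  set s : Y ⟶ Y' := Injective.factorThru w (Abelian.factorThruCoimage p) with hs
  have hfac : Abelian.factorThruCoimage p ≫ s = w := Injective.comp_factorThru _ _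
  have hps : p ≫ s = u := by
    rw [← Abelian.coimage.fac p, Category.assoc, hfac, hπw]
  refine ⟨s, ?_, ?_⟩
  · have := biprod.inr ≫= hps
    simp only [hp, hu, biprod.inr_desc_assoc, biprod.inr_desc] at this
    simpa using neg_injective (by simpa using this)
  · have := biprod.inl ≫= hps
    simpa [hp, hu] using this
end

section
/- Let A be an abelian category. Suppose given commutative quadrangles Q = (f : A ⟶ B, g : A ⟶ C, h : B ⟶ D, k : C ⟶ D) and Q' = (f' : A' ⟶ B', g' : A' ⟶ C', h' : B' ⟶ D', k' : C' ⟶ D') and a morphism of quadrangles α : A ⟶ A', β : B ⟶ B', γ : C ⟶ C', δ : D ⟶ D' satisfying f ≫ β = α ≫ f', g ≫ γ = α ≫ g', h ≫ δ = β ≫ h', k ≫ δ = γ ≫ k'. (1) If Q is a pushout and Q' is a weak square, then the quadrangle formed by the cokernels of α, β, γ, δ with the induced morphisms (cokernel.map) is a weak square. (2) If Q is a weak square and Q' is a pullback, then the quadrangle formed by the kernels of α, β, γ, δ with the induced morphisms (kernel.map) is a weak square. -/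
open CategoryTheory CategoryTheory.Limits

/-!
The diagonal sequences of commutative quadrangles are short complexes, and a morphism of
quadrangles `(α, β, γ, δ)` is a morphism of these complexes with middle component
`biprod.map β γ`. The kernel quadrangle maps into `Q` by the kernel inclusions, whose middle
component `biprod.map (kernel.ι β) (kernel.ι γ)` is a monomorphism, and a chase up to refinements
(the kernel half of the snake lemma) shows that exactness of the diagonal of `Q` together with
injectivity of `biprod.lift f' g'` forces exactness of the diagonal of the kernel quadrangle.
The cokernel statement is the dual one, obtained in the opposite category.
-/

namespace CategoryTheory.ShortComplex

variable {C : Type*} [Category C] [Abelian C]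

lemma exact_of_exact_of_mono_of_kernel {K S T : ShortComplex C} (ι : K ⟶ S) (φ : S ⟶ T)
    (hS : S.Exact) [Mono T.f] [Mono ι.τ₂] (hι₂ : ι.τ₂ ≫ φ.τ₂ = 0) (hι₁ : ι.τ₁ ≫ φ.τ₁ = 0)
    (hker : (ShortComplex.mk ι.τ₁ φ.τ₁ hι₁).Exact) : K.Exact := by
  rw [exact_iff_exact_up_to_refinements]
  intro A x₂ hx₂
  obtain ⟨A₁, π₁, hπ₁, y₁, hy₁⟩ := hS.exact_up_to_refinements (x₂ ≫ ι.τ₂)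
    (by rw [Category.assoc, ι.comm₂₃, reassoc_of% hx₂, zero_comp])
  have hy₁' : y₁ ≫ φ.τ₁ = 0 := by
    rw [← cancel_mono T.f, Category.assoc, φ.comm₁₂, ← reassoc_of% hy₁, hι₂, comp_zero,
      comp_zero, zero_comp]
  obtain ⟨A₂, π₂, hπ₂, x₁, hx₁⟩ := hker.exact_up_to_refinements y₁ hy₁'
  refine ⟨A₂, π₂ ≫ π₁, epi_comp _ _, x₁, ?_⟩
  rw [← cancel_mono ι.τ₂, Category.assoc, Category.assoc, hy₁, reassoc_of% hx₁, Category.assoc,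
    ι.comm₁₂]

lemma exact_of_exact_of_epi_of_cokernel {S T Q : ShortComplex C} (φ : S ⟶ T) (π : T ⟶ Q)
    (hT : T.Exact) [Epi S.g] [Epi π.τ₂] (hπ₂ : φ.τ₂ ≫ π.τ₂ = 0) (hπ₃ : φ.τ₃ ≫ π.τ₃ = 0)
    (hcoker : (ShortComplex.mk φ.τ₃ π.τ₃ hπ₃).Exact) : Q.Exact := by
  have : Mono S.op.f := inferInstanceAs (Mono S.g.op)
  have : Mono (opMap π).τ₂ := inferInstanceAs (Mono π.τ₂.op)
  exact (exact_op_iff Q).1 <| exact_of_exact_of_mono_of_kernel (opMap π) (opMap φ) hT.op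
    (Quiver.Hom.unop_inj hπ₂) _ hcoker.op

end CategoryTheory.ShortComplex

section Quadrangle

variable {C : Type*} [Category C] [Abelian C] {W X Y Z W' X' Y' Z' : C}
  {f : W ⟶ X} {g : W ⟶ Y} {h : X ⟶ Z} {k : Y ⟶ Z}
  {f' : W' ⟶ X'} {g' : W' ⟶ Y'} {h' : X' ⟶ Z'} {k' : Y' ⟶ Z'}

noncomputable abbrev diagonalComplex (w : f ≫ h = g ≫ k) : ShortComplex C :=
  ShortComplex.mk (biprod.lift f g) (biprod.desc h (-k)) (by simp [w])

lemma isWeakSquare_iff_exact_diagonalComplex (w : f ≫ h = g ≫ k) :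
    IsWeakSquare f g h k ↔ (diagonalComplex w).Exact :=
  ⟨fun ⟨_, hS⟩ => hS, fun hS => ⟨_, hS⟩⟩

noncomputable abbrev diagonalComplexMap {w : f ≫ h = g ≫ k} {w' : f' ≫ h' = g' ≫ k'}
    (α : W ⟶ W') (β : X ⟶ X') (γ : Y ⟶ Y') (δ : Z ⟶ Z')
    (hf : f ≫ β = α ≫ f') (hg : g ≫ γ = α ≫ g') (hh : h ≫ δ = β ≫ h') (hk : k ≫ δ = γ ≫ k') :
    diagonalComplex w ⟶ diagonalComplex w' where
  τ₁ := α
  τ₂ := biprod.map β γ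
  τ₃ := δ
  comm₁₂ := by ext <;> simp [hf, hg]
  comm₂₃ := by ext <;> simp [hh, hk]

theorem IsWeakSquare.kernel_map (commQ : f ≫ h = g ≫ k) (commQ' : f' ≫ h' = g' ≫ k')
    (α : W ⟶ W') (β : X ⟶ X') (γ : Y ⟶ Y') (δ : Z ⟶ Z')
    (hf : f ≫ β = α ≫ f') (hg : g ≫ γ = α ≫ g') (hh : h ≫ δ = β ≫ h') (hk : k ≫ δ = γ ≫ k')
    (hQ : IsWeakSquare f g h k) [Mono (biprod.lift f' g')] :
    IsWeakSquare (kernel.map α β f f' hf.symm) (kernel.map α γ g g' hg.symm)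
      (kernel.map β δ h h' hh.symm) (kernel.map γ δ k k' hk.symm) := by
  have commK : kernel.map α β f f' hf.symm ≫ kernel.map β δ h h' hh.symm =
      kernel.map α γ g g' hg.symm ≫ kernel.map γ δ k k' hk.symm := by
    ext; simp [commQ]
  rw [isWeakSquare_iff_exact_diagonalComplex commK]
  exact ShortComplex.exact_of_exact_of_mono_of_kernel
    (diagonalComplexMap (kernel.ι α) (kernel.ι β) (kernel.ι γ) (kernel.ι δ)
      (by simp) (by simp) (by simp) (by simp))
    (diagonalComplexMap (w' := commQ') α β γ δ hf hg hh hk)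
    ((isWeakSquare_iff_exact_diagonalComplex commQ).1 hQ)
    (by ext <;> simp) (kernel.condition α)
    (ShortComplex.exact_of_f_is_kernel _ (kernelIsKernel α))

theorem IsWeakSquare.cokernel_map (commQ : f ≫ h = g ≫ k) (commQ' : f' ≫ h' = g' ≫ k')
    (α : W ⟶ W') (β : X ⟶ X') (γ : Y ⟶ Y') (δ : Z ⟶ Z')
    (hf : f ≫ β = α ≫ f') (hg : g ≫ γ = α ≫ g') (hh : h ≫ δ = β ≫ h') (hk : k ≫ δ = γ ≫ k')
    [Epi (biprod.desc h (-k))] (hQ' : IsWeakSquare f' g' h' k') :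
    IsWeakSquare (cokernel.map α β f f' hf.symm) (cokernel.map α γ g g' hg.symm)
      (cokernel.map β δ h h' hh.symm) (cokernel.map γ δ k k' hk.symm) := by
  have commK : cokernel.map α β f f' hf.symm ≫ cokernel.map β δ h h' hh.symm =
      cokernel.map α γ g g' hg.symm ≫ cokernel.map γ δ k k' hk.symm := by
    ext; simp [reassoc_of% commQ']
  rw [isWeakSquare_iff_exact_diagonalComplex commK]
  exact ShortComplex.exact_of_exact_of_epi_of_cokernel
    (diagonalComplexMap (w := commQ) α β γ δ hf hg hh hk)
    (diagonalComplexMap (cokernel.π α) (cokernel.π β) (cokernel.π γ) (cokernel.π δ)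
      (by simp) (by simp) (by simp) (by simp))
    ((isWeakSquare_iff_exact_diagonalComplex commQ').1 hQ')
    (by ext <;> simp) (cokernel.condition δ)
    (ShortComplex.exact_of_g_is_cokernel _ (cokernelIsCokernel δ))

end Quadrangle

/-- Given a morphism `(α, β, γ, δ)` of commutative quadrangles `Q = (f, g, h, k)` and
`Q' = (f', g', h', k')`:
(1) if `Q` is a pushout and `Q'` is a weak square, then the quadrangle of cokernels (with the
induced morphisms `cokernel.map`) is a weak square;
(2) if `Q` is a weak square and `Q'` is a pullback, then the quadrangle of kernels (with the
induced morphisms `kernel.map`) is a weak square. -/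
theorem weakSquare_of_kernels_and_cokernels {A : Type*} [Category A] [Abelian A]
    {W X Y Z W' X' Y' Z' : A}
    (f : W ⟶ X) (g : W ⟶ Y) (h : X ⟶ Z) (k : Y ⟶ Z)
    (f' : W' ⟶ X') (g' : W' ⟶ Y') (h' : X' ⟶ Z') (k' : Y' ⟶ Z')
    (commQ : f ≫ h = g ≫ k) (commQ' : f' ≫ h' = g' ≫ k')
    (α : W ⟶ W') (β : X ⟶ X') (γ : Y ⟶ Y') (δ : Z ⟶ Z')
    (hf : f ≫ β = α ≫ f') (hg : g ≫ γ = α ≫ g')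
    (hh : h ≫ δ = β ≫ h') (hk : k ≫ δ = γ ≫ k') :
    (IsPushoutSquare f g h k → IsWeakSquare f' g' h' k' →
       IsWeakSquare (cokernel.map α β f f' hf.symm) (cokernel.map α γ g g' hg.symm)
         (cokernel.map β δ h h' hh.symm) (cokernel.map γ δ k k' hk.symm)) ∧
    (IsWeakSquare f g h k → IsPullbackSquare f' g' h' k' →
       IsWeakSquare (kernel.map α β f f' hf.symm) (kernel.map α γ g g' hg.symm)
         (kernel.map β δ h h' hh.symm) (kernel.map γ δ k k' hk.symm)) := by
  refine ⟨fun hQ hQ' => ?_, fun hQ hQ' => ?_⟩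
  · have := hQ.2
    exact IsWeakSquare.cokernel_map commQ commQ' α β γ δ hf hg hh hk hQ'
  · have := hQ'.2
    exact IsWeakSquare.kernel_map commQ commQ' α β γ δ hf hg hh hk hQ
end

section
/- Let A be an abelian category. Suppose given morphisms u : X ⟶ Y, v : Y ⟶ Z, u' : X' ⟶ Y', v' : Y' ⟶ Z', w : Y'' ⟶ Z'', and x : X ⟶ X', y : Y ⟶ Y', z : Z ⟶ Z', y' : Y' ⟶ Y'', z' : Z' ⟶ Z'' with u ≫ y = x ≫ u', v ≫ z = y ≫ v', u' ≫ y' = 0, and v' ≫ z' = y' ≫ w. Assume that the quadrangles (u, x, y, u'), (v, y, z, v') and (v', y', z', w) are weak squares and that the pair (u', y') is exact at Y'. Set a := x ≫ u' ≫ v' : X ⟶ Z', b := y ≫ v' : Y ⟶ Z', c := y ≫ v' ≫ z' : Y ⟶ Z''. Then the induced morphism image a ⟶ image b (image.map over the commutative square with horizontal morphism u and identity on Z', using u ≫ b = a) is a monomorphism, the induced morphism image b ⟶ image c (image.map over the square with identity on Y and vertical morphism z', using b ≫ z' = c) is an epimorphism, and this pair of morphisms is exact at image b; i.e., the images form a short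 exact sequence. -/
open CategoryTheory CategoryTheory.Limits

open CategoryTheory.Abelian CategoryTheory.Abelian.Pseudoelement
open scoped Pseudoelement

lemma IsWeakSquare.pseudo {A : Type*} [Category A] [Abelian A] {W X Y Z : A}
    {f : W ⟶ X} {g : W ⟶ Y} {h : X ⟶ Z} {k : Y ⟶ Z} (hw : IsWeakSquare f g h k)
    (pb : X) (pc : Y) (he : h pb = k pc) : ∃ pa : W, f pa = pb ∧ g pa = pc := by
  obtain ⟨w0, hex⟩ := hw
  obtain ⟨s, hs1, hs2⟩ := Pseudoelement.pseudo_pullback he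
  set m : pullback h k ⟶ X ⊞ Y := biprod.lift (pullback.fst h k) (pullback.snd h k) with hm_def
  have hm : m ≫ biprod.desc h (-k) = 0 := by
    simp [hm_def, pullback.condition]
  obtain ⟨pa, hpa⟩ := Pseudoelement.pseudo_exact_of_exact hex (m s) (by
    rw [← Pseudoelement.comp_apply, hm, Pseudoelement.zero_apply])
  refine ⟨pa, ?_, ?_⟩
  · have h1 := congrArg (pseudoApply (biprod.fst : X ⊞ Y ⟶ X)) hpa
    rw [← Pseudoelement.comp_apply, ← Pseudoelement.comp_apply] at h1
    have e1 : (ShortComplex.mk (biprod.lift f g) (biprod.desc h (-k)) w0).f ≫ biprod.fst = f :=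
      biprod.lift_fst f g
    have e2 : m ≫ (biprod.fst : X ⊞ Y ⟶ X) = pullback.fst h k := biprod.lift_fst _ _
    rw [e1, e2] at h1
    rw [h1, hs1]
  · have h1 := congrArg (pseudoApply (biprod.snd : X ⊞ Y ⟶ Y)) hpa
    rw [← Pseudoelement.comp_apply, ← Pseudoelement.comp_apply] at h1
    have e1 : (ShortComplex.mk (biprod.lift f g) (biprod.desc h (-k)) w0).f ≫ biprod.snd = g :=
      biprod.lift_snd f g
    have e2 : m ≫ (biprod.snd : X ⊞ Y ⟶ Y) = pullback.snd h k := biprod.lift_snd _ _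
    rw [e1, e2] at h1
    rw [h1, hs2]

/-- Given weak squares `(u, x, y, u')`, `(v, y, z, v')` and `(v', y', z', w)` and exactness of
`(u', y')` at `Y'`, with `a = x ≫ u' ≫ v'`, `b = y ≫ v'` and `c = y ≫ v' ≫ z'`, the induced
morphism `image a ⟶ image b` is a monomorphism, the induced morphism `image b ⟶ image c` is
an epimorphism, and the pair is exact at `image b`: the images form a short exact sequence. -/
theorem images_shortExact {A : Type*} [Category A] [Abelian A]
    {X Y Z X' Y' Z' Y'' Z'' : A}
    (u : X ⟶ Y) (v : Y ⟶ Z) (u' : X' ⟶ Y') (v' : Y' ⟶ Z') (w : Y'' ⟶ Z'')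
    (x : X ⟶ X') (y : Y ⟶ Y') (z : Z ⟶ Z') (y' : Y' ⟶ Y'') (z' : Z' ⟶ Z'')
    (comm₁ : u ≫ y = x ≫ u') (comm₂ : v ≫ z = y ≫ v')
    (h0 : u' ≫ y' = 0) (comm₃ : v' ≫ z' = y' ≫ w)
    (ws₁ : IsWeakSquare u x y u') (ws₂ : IsWeakSquare v y z v')
    (ws₃ : IsWeakSquare v' y' z' w)
    (hex : (ShortComplex.mk u' y' h0).Exact) :
    Mono (image.map (Arrow.homMk' (u := u) (v := 𝟙 Z')
        (by rw [Category.comp_id, ← Category.assoc, comm₁, Category.assoc]) :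
          Arrow.mk (x ≫ u' ≫ v') ⟶ Arrow.mk (y ≫ v'))) ∧
    Epi (image.map (Arrow.homMk' (u := 𝟙 Y) (v := z')
        (by rw [Category.id_comp, Category.assoc]) :
          Arrow.mk (y ≫ v') ⟶ Arrow.mk (y ≫ v' ≫ z'))) ∧
    ∃ w0 : image.map (Arrow.homMk' (u := u) (v := 𝟙 Z')
        (by rw [Category.comp_id, ← Category.assoc, comm₁, Category.assoc]) :
          Arrow.mk (x ≫ u' ≫ v') ⟶ Arrow.mk (y ≫ v')) ≫
      image.map (Arrow.homMk' (u := 𝟙 Y) (v := z')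
        (by rw [Category.id_comp, Category.assoc]) :
          Arrow.mk (y ≫ v') ⟶ Arrow.mk (y ≫ v' ≫ z')) = 0,
      (ShortComplex.mk _ _ w0).Exact := by
  set φ : image (x ≫ u' ≫ v') ⟶ image (y ≫ v') :=
    image.map (Arrow.homMk' (u := u) (v := 𝟙 Z')
        (by rw [Category.comp_id, ← Category.assoc, comm₁, Category.assoc])) with hφ
  set ψ : image (y ≫ v') ⟶ image (y ≫ v' ≫ z') :=
    image.map (Arrow.homMk' (u := 𝟙 Y) (v := z')
        (by rw [Category.id_comp, Category.assoc])) with hψ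
  have hφι : φ ≫ Limits.image.ι (y ≫ v') = Limits.image.ι (x ≫ u' ≫ v') := by
    rw [hφ]
    exact (Limits.image.map_ι (Arrow.homMk' (u := u) (v := 𝟙 Z')
      (by rw [Category.comp_id, ← Category.assoc, comm₁, Category.assoc]) :
        Arrow.mk (x ≫ u' ≫ v') ⟶ Arrow.mk (y ≫ v'))).trans (Category.comp_id _)
  have hπφ : factorThruImage (x ≫ u' ≫ v') ≫ φ = u ≫ factorThruImage (y ≫ v') := by
    rw [hφ]; simpa [Arrow.homMk'] using Limits.image.factor_map (Arrow.homMk' (u := u) (v := 𝟙 Z')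
      (by rw [Category.comp_id, ← Category.assoc, comm₁, Category.assoc]) :
        Arrow.mk (x ≫ u' ≫ v') ⟶ Arrow.mk (y ≫ v'))
  have hψι : ψ ≫ Limits.image.ι (y ≫ v' ≫ z') = Limits.image.ι (y ≫ v') ≫ z' := by
    rw [hψ]
    simpa [Arrow.homMk'] using Limits.image.map_ι (Arrow.homMk' (u := 𝟙 Y) (v := z')
      (by rw [Category.id_comp, Category.assoc]) :
        Arrow.mk (y ≫ v') ⟶ Arrow.mk (y ≫ v' ≫ z'))
  have hπψ : factorThruImage (y ≫ v') ≫ ψ = factorThruImage (y ≫ v' ≫ z') := by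
    rw [hψ]; exact (Limits.image.factor_map (Arrow.homMk' (u := 𝟙 Y) (v := z')
      (by rw [Category.id_comp, Category.assoc]) :
        Arrow.mk (y ≫ v') ⟶ Arrow.mk (y ≫ v' ≫ z'))).trans (Category.id_comp _)
  have haz : (x ≫ u' ≫ v') ≫ z' = 0 := by
    rw [Category.assoc, Category.assoc, comm₃, ← Category.assoc u', h0, zero_comp, comp_zero]
  have hιz : Limits.image.ι (x ≫ u' ≫ v') ≫ z' = 0 := by
    rw [← cancel_epi (factorThruImage (x ≫ u' ≫ v')), ← Category.assoc, Limits.image.fac, haz,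
      comp_zero]
  have w0 : φ ≫ ψ = 0 := by
    rw [← cancel_mono (Limits.image.ι (y ≫ v' ≫ z')), Category.assoc, hψι, ← Category.assoc φ (Limits.image.ι (y ≫ v')) z', hφι,
      hιz, zero_comp]
  have hmono : Mono φ := by
    have : Mono (φ ≫ Limits.image.ι (y ≫ v')) := by rw [hφι]; infer_instance
    exact mono_of_mono φ (Limits.image.ι (y ≫ v'))
  have hepi : Epi ψ := by
    have : Epi (factorThruImage (y ≫ v') ≫ ψ) := by rw [hπψ]; infer_instance
    exact epi_of_epi (factorThruImage (y ≫ v')) ψ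
  refine ⟨hmono, hepi, w0, ?_⟩
  apply Pseudoelement.exact_of_pseudo_exact (ShortComplex.mk φ ψ w0)
  intro t ht
  obtain ⟨q, hq⟩ := Pseudoelement.pseudo_surjective_of_epi (factorThruImage (y ≫ v')) t
  have hcq : pseudoApply (y ≫ v' ≫ z') q = 0 := by
    have h1 : pseudoApply (factorThruImage (y ≫ v' ≫ z')) q = 0 := by
      rw [← hπψ, Pseudoelement.comp_apply, hq]; exact ht
    have h2 := congrArg (pseudoApply (Limits.image.ι (y ≫ v' ≫ z'))) h1
    rw [← Pseudoelement.comp_apply, Limits.image.fac, Pseudoelement.apply_zero] at h2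
    exact h2
  -- weak square ws₃
  obtain ⟨p, hp1, hp2⟩ := ws₃.pseudo (pseudoApply v' (pseudoApply y q)) 0 (by
    rw [Pseudoelement.apply_zero, ← Pseudoelement.comp_apply, ← Pseudoelement.comp_apply]
    exact hcq)
  -- exactness of (u', y')
  obtain ⟨px', hpx'⟩ := Pseudoelement.pseudo_exact_of_exact hex p hp2
  -- weak square ws₂
  obtain ⟨py, hpy1, hpy2⟩ := ws₂.pseudo (pseudoApply v q) p (by
    rw [hp1, ← Pseudoelement.comp_apply, ← Pseudoelement.comp_apply, ← comm₂])
  -- weak square ws₁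
  obtain ⟨px, hpx1, hpx2⟩ := ws₁.pseudo py px' (by rw [hpy2]; exact hpx'.symm)
  refine ⟨pseudoApply (factorThruImage (x ≫ u' ≫ v')) px, ?_⟩
  have key : pseudoApply (y ≫ v') py = pseudoApply (y ≫ v') q := by
    rw [Pseudoelement.comp_apply, Pseudoelement.comp_apply, hpy2]; exact hp1
  have : pseudoApply φ (pseudoApply (factorThruImage (x ≫ u' ≫ v')) px) =
      pseudoApply (factorThruImage (y ≫ v')) py := by
    rw [← Pseudoelement.comp_apply, hπφ, Pseudoelement.comp_apply, hpx1]
  show pseudoApply φ _ = t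
  rw [this, ← hq]
  apply Pseudoelement.pseudo_injective_of_mono (Limits.image.ι (y ≫ v'))
  rw [← Pseudoelement.comp_apply, ← Pseudoelement.comp_apply, Limits.image.fac]
  exact key
end

section
/- Let A be an abelian category. Suppose given a pullback square consisting of x : X' ⟶ X, f' : X' ⟶ Y', f : X ⟶ Y, y : Y' ⟶ Y with f' ≫ y = x ≫ f (IsPullback), where y is an epimorphism. Suppose given g : Y ⟶ X, an object B that is both injective and projective, and h₁ : Y ⟶ B, h₂ : B ⟶ Y with g ≫ f = 𝟙 Y + h₁ ≫ h₂. Then there exist g' : Y' ⟶ X' and h₂' : B ⟶ Y' such that h₂' ≫ y = h₂, g' ≫ x = y ≫ g, and g' ≫ f' = 𝟙 Y' + y ≫ h₁ ≫ h₂'. (In particular, if f is a retraction up to maps factoring through a bijective object, then so is the pullback f' of f along the epimorphism y.) -/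
/-!
Projectivity of `B` lifts `h₂` through the epimorphism `y` to some `h₂'`. Then `y ≫ g` and
`𝟙 Y' + y ≫ h₁ ≫ h₂'` have the same composite to `Y`, so the pullback property glues them
into the required `g'`.
-/

open CategoryTheory CategoryTheory.Limits

theorem CategoryTheory.IsPullback.exists_lift_comp_eq_id_add {C : Type*} [Category C]
    [Preadditive C] {X X' Y Y' B : C} {x : X' ⟶ X} {f' : X' ⟶ Y'} {f : X ⟶ Y} {y : Y' ⟶ Y}
    (pb : IsPullback x f' f y) (g : Y ⟶ X) (h₁ : Y ⟶ B) (h₂' : B ⟶ Y')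
    (hg : g ≫ f = 𝟙 Y + h₁ ≫ h₂' ≫ y) :
    ∃ g' : Y' ⟶ X', g' ≫ x = y ≫ g ∧ g' ≫ f' = 𝟙 Y' + y ≫ h₁ ≫ h₂' := by
  have hcomm : (y ≫ g) ≫ f = (𝟙 Y' + y ≫ h₁ ≫ h₂') ≫ y := by
    simp only [Category.assoc, hg, Preadditive.comp_add, Preadditive.add_comp, Category.comp_id,
      Category.id_comp]
  exact ⟨pb.lift _ _ hcomm, pb.lift_fst _ _ _, pb.lift_snd _ _ _⟩

theorem retractionUpToHomotopy_pullback_general {A : Type*} [Category A] [Abelian A]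
    {X X' Y Y' B : A} (x : X' ⟶ X) (f' : X' ⟶ Y') (f : X ⟶ Y) (y : Y' ⟶ Y)
    (pb : IsPullback x f' f y) (hy : Epi y)
    (g : Y ⟶ X) (hBp : Projective B)
    (h₁ : Y ⟶ B) (h₂ : B ⟶ Y) (hg : g ≫ f = 𝟙 Y + h₁ ≫ h₂) :
    ∃ (g' : Y' ⟶ X') (h₂' : B ⟶ Y'),
      h₂' ≫ y = h₂ ∧ g' ≫ x = y ≫ g ∧ g' ≫ f' = 𝟙 Y' + y ≫ h₁ ≫ h₂' := by
  obtain ⟨h₂', rfl⟩ := hBp.factors h₂ y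
  obtain ⟨g', hx, hf'⟩ := pb.exists_lift_comp_eq_id_add g h₁ h₂' hg
  exact ⟨g', h₂', rfl, hx, hf'⟩

/-- Given a pullback square `(x : X' ⟶ X, f' : X' ⟶ Y', f : X ⟶ Y, y : Y' ⟶ Y)` in an abelian
category with `y` an epimorphism, if `f` is a retraction up to a morphism factoring through an
object `B` that is both injective and projective (i.e. `g ≫ f = 𝟙 Y + h₁ ≫ h₂`), then so is
its pullback `f'`: there are `g' : Y' ⟶ X'` and `h₂' : B ⟶ Y'` with `h₂' ≫ y = h₂`,
`g' ≫ x = y ≫ g` and `g' ≫ f' = 𝟙 Y' + y ≫ h₁ ≫ h₂'`. -/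
theorem retractionUpToHomotopy_pullback {A : Type*} [Category A] [Abelian A]
    {X X' Y Y' B : A} (x : X' ⟶ X) (f' : X' ⟶ Y') (f : X ⟶ Y) (y : Y' ⟶ Y)
    (pb : IsPullback x f' f y) (hy : Epi y)
    (g : Y ⟶ X) (hBi : Injective B) (hBp : Projective B)
    (h₁ : Y ⟶ B) (h₂ : B ⟶ Y) (hg : g ≫ f = 𝟙 Y + h₁ ≫ h₂) :
    ∃ (g' : Y' ⟶ X') (h₂' : B ⟶ Y'),
      h₂' ≫ y = h₂ ∧ g' ≫ x = y ≫ g ∧ g' ≫ f' = 𝟙 Y' + y ≫ h₁ ≫ h₂' :=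
  retractionUpToHomotopy_pullback_general x f' f y pb hy g hBp h₁ h₂ hg
end

section
/- Let A be an abelian category. Suppose given a pullback square consisting of x : X' ⟶ X, f' : X' ⟶ Y', f : X ⟶ Y, y : Y' ⟶ Y with f' ≫ y = x ≫ f (IsPullback), where y is an epimorphism. Suppose there exist g : Y ⟶ X, objects B₁, B₂ that are both injective and projective, and morphisms h₁ : Y ⟶ B₁, h₂ : B₁ ⟶ Y, k₁ : X ⟶ B₂, k₂ : B₂ ⟶ X with g ≫ f = 𝟙 Y + h₁ ≫ h₂ and f ≫ g = 𝟙 X + k₁ ≫ k₂. Then there exist g'' : Y' ⟶ X', objects C₁, C₂ that are both injective and projective, and morphisms p₁ : Y' ⟶ C₁, p₂ : C₁ ⟶ Y', q₁ : X' ⟶ C₂, q₂ : C₂ ⟶ X' with g'' ≫ f' = 𝟙 Y' + p₁ ≫ p₂ and f' ≫ g'' = 𝟙 X' + q₁ ≫ q₂. (In particular, if f is invertible modulo morphisms factoring through bijective objects — a homotopism — then so is its pullback f' along the epimorphism y.) -/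
open CategoryTheory CategoryTheory.Limits

/-- Given a pullback square `(x : X' ⟶ X, f' : X' ⟶ Y', f : X ⟶ Y, y : Y' ⟶ Y)` in an abelian
category with `y` an epimorphism, if `f` is a homotopism, i.e. invertible up to morphisms
factoring through objects that are both injective and projective, then so is its pullback
`f'`. -/
theorem homotopism_pullback {A : Type*} [Category A] [Abelian A]
    {X X' Y Y' B₁ B₂ : A} (x : X' ⟶ X) (f' : X' ⟶ Y') (f : X ⟶ Y) (y : Y' ⟶ Y)
    (pb : IsPullback x f' f y) (hy : Epi y)
    (g : Y ⟶ X)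
    (hB₁i : Injective B₁) (hB₁p : Projective B₁)
    (hB₂i : Injective B₂) (hB₂p : Projective B₂)
    (h₁ : Y ⟶ B₁) (h₂ : B₁ ⟶ Y) (k₁ : X ⟶ B₂) (k₂ : B₂ ⟶ X)
    (hgf : g ≫ f = 𝟙 Y + h₁ ≫ h₂) (hfg : f ≫ g = 𝟙 X + k₁ ≫ k₂) :
    ∃ (g'' : Y' ⟶ X') (C₁ C₂ : A) (_ : Injective C₁) (_ : Projective C₁)
      (_ : Injective C₂) (_ : Projective C₂)
      (p₁ : Y' ⟶ C₁) (p₂ : C₁ ⟶ Y') (q₁ : X' ⟶ C₂) (q₂ : C₂ ⟶ X'),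
      g'' ≫ f' = 𝟙 Y' + p₁ ≫ p₂ ∧ f' ≫ g'' = 𝟙 X' + q₁ ≫ q₂ := by
  haveI := hB₁i; haveI := hB₁p; haveI := hB₂i; haveI := hB₂p; haveI := hy
  -- `x` is an epimorphism, being the pullback of the epimorphism `y`.
  haveI hx : Epi x := by
    have := Abelian.epi_fst_of_isLimit f y pb.isLimit
    exact this
  -- lift `h₂` along the epi `y` using projectivity of `B₁`
  obtain ⟨h₂', hh₂'⟩ : ∃ h₂' : B₁ ⟶ Y', h₂' ≫ y = h₂ :=
    ⟨Projective.factorThru h₂ y, Projective.factorThru_comp _ _⟩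
  -- lift `k₂` along the epi `x` using projectivity of `B₂`
  obtain ⟨κ, hκ⟩ : ∃ κ : B₂ ⟶ X', κ ≫ x = k₂ :=
    ⟨Projective.factorThru k₂ x, Projective.factorThru_comp _ _⟩
  have compat : (y ≫ g) ≫ f = (𝟙 Y' + y ≫ h₁ ≫ h₂') ≫ y := by
    rw [Category.assoc, hgf]
    simp only [Preadditive.comp_add, Preadditive.add_comp, Category.comp_id,
      Category.id_comp, Category.assoc, hh₂']
  obtain ⟨g'', hg''x, hg''f'⟩ :
      ∃ g'' : Y' ⟶ X', g'' ≫ x = y ≫ g ∧ g'' ≫ f' = 𝟙 Y' + y ≫ h₁ ≫ h₂' :=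
    ⟨pb.lift (y ≫ g) (𝟙 Y' + y ≫ h₁ ≫ h₂') compat, pb.lift_fst _ _ _, pb.lift_snd _ _ _⟩
  -- the auxiliary map `t₀`, killed by `y`
  obtain ⟨t₀, t₀def⟩ : ∃ t₀ : X' ⟶ Y', t₀ = x ≫ f ≫ h₁ ≫ h₂' - x ≫ k₁ ≫ κ ≫ f' := ⟨_, rfl⟩
  have ht₀y : t₀ ≫ y = 0 := by
    have eA : f ≫ g ≫ f = f + k₁ ≫ k₂ ≫ f := by
      rw [← Category.assoc, hfg, Preadditive.add_comp, Category.id_comp, Category.assoc]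
    have eB : f ≫ g ≫ f = f + f ≫ h₁ ≫ h₂ := by
      rw [hgf, Preadditive.comp_add, Category.comp_id]
    have e3 : k₁ ≫ k₂ ≫ f = f ≫ h₁ ≫ h₂ := add_left_cancel (eA.symm.trans eB)
    have hκ' : κ ≫ x ≫ f = k₂ ≫ f := by rw [← Category.assoc, hκ]
    have : t₀ ≫ y = x ≫ f ≫ h₁ ≫ h₂ - x ≫ k₁ ≫ k₂ ≫ f := by
      simp only [t₀def, Preadditive.sub_comp, Category.assoc, ← pb.w, hκ', hh₂']
    rw [this, show x ≫ k₁ ≫ k₂ ≫ f = x ≫ f ≫ h₁ ≫ h₂ from by rw [e3], sub_self]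
  -- the key identity
  have key : f' ≫ g'' = 𝟙 X' + (x ≫ k₁) ≫ κ + t₀ ≫ g'' := by
    apply pb.hom_ext
    · simp only [Category.assoc, hg''x, Preadditive.add_comp, Category.id_comp]
      rw [← Category.assoc t₀ y g, ht₀y]
      rw [← pb.w_assoc, hfg]
      simp only [Preadditive.comp_add, Category.comp_id, hκ, Preadditive.add_comp,
        zero_comp, add_zero, Category.assoc]
    · simp only [Category.assoc, hg''f', Preadditive.add_comp, Category.id_comp,
        Preadditive.comp_add, Category.comp_id]
      have ht : t₀ ≫ (y ≫ h₁ ≫ h₂') = 0 := by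
        rw [← Category.assoc, ht₀y, zero_comp]
      rw [ht, add_zero]
      simp only [t₀def, pb.w_assoc]
      abel
  refine ⟨g'', B₁, B₂ ⊞ B₁, inferInstance, inferInstance, inferInstance, inferInstance,
    y ≫ h₁, h₂', biprod.lift (x ≫ k₁) (x ≫ f ≫ h₁),
    biprod.desc (κ - κ ≫ f' ≫ g'') (h₂' ≫ g''), ?_, ?_⟩
  · rw [hg''f']
    simp only [Category.assoc]
  · conv_lhs => rw [key]
    simp only [biprod.lift_desc, Preadditive.comp_sub, t₀def, Preadditive.sub_comp,
      Category.assoc]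
    abel
end

section
/- Let A be an abelian category. Suppose given morphisms f₁ : X ⟶ Y, f₂ : Y ⟶ Z, x : X ⟶ X', y : Y ⟶ Y', z : Z ⟶ Z', f₁' : X' ⟶ Y', f₂' : Y' ⟶ Z' with f₁ ≫ y = x ≫ f₁' and f₂ ≫ z = y ≫ f₂'. If two out of the three quadrangles — the left quadrangle (f₁, x, y, f₁'), the right quadrangle (f₂, y, z, f₂'), and the outer quadrangle (f₁ ≫ f₂, x, z, f₁' ≫ f₂') — are squares (have short exact diagonal sequences), then so is the third. -/
/-!
A quadrangle is a square exactly when it is both a pullback and a pushout: the diagonal sequence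
is exact with mono first map iff the quadrangle is a pullback, and exact with epi second map iff
it is a pushout. Pasting of pullbacks and pushouts gives the outer square. For the other two
cases, the pasting lemmas give one of the two properties of the unknown square (pushout on the
right, pullback on the left), hence exactness of its diagonal sequence. The missing mono comes
from a chase: a map killed by `f₂` and `y` lifts through the left pullback to a map killed by
`f₁ ≫ f₂` and `x`, hence is zero; dually for the missing epi.
-/

open CategoryTheory CategoryTheory.Limits

namespace CategoryTheory

section Preadditive

variable {C : Type*} [Category* C] [Preadditive C]

noncomputable def CommSq.shortComplexIsoShortComplex' {W X Y Z : C} [HasBinaryBiproduct X Y]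
    {f : W ⟶ X} {g : W ⟶ Y} {h : X ⟶ Z} {k : Y ⟶ Z} (sq : CommSq f g h k) :
    sq.shortComplex ≅ sq.shortComplex' :=
  ShortComplex.isoMk (Iso.refl W)
    (Iso.mk (biprod.map (𝟙 X) (-𝟙 Y)) (biprod.map (𝟙 X) (-𝟙 Y)) (by ext <;> simp)
      (by ext <;> simp) : X ⊞ Y ≅ X ⊞ Y)
    (Iso.refl Z)
    (show 𝟙 W ≫ biprod.lift f g = biprod.lift f (-g) ≫ biprod.map (𝟙 X) (-𝟙 Y) by ext <;> simp)
    (show biprod.map (𝟙 X) (-𝟙 Y) ≫ biprod.desc h (-k) = biprod.desc h k ≫ 𝟙 Z by ext <;> simp)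

variable [HasBinaryBiproducts C] {X Y Z X' Y' Z' : C}

lemma IsPullback.mono_biprod_lift_of_comp {f₁ : X ⟶ Y} {f₂ : Y ⟶ Z} {x : X ⟶ X'}
    {y : Y ⟶ Y'} {f₁' : X' ⟶ Y'} (h : IsPullback f₁ x y f₁')
    [Mono (biprod.lift (f₁ ≫ f₂) x)] : Mono (biprod.lift f₂ y) :=
  Preadditive.mono_of_cancel_zero _ fun t ht => by
    have ht₂ : t ≫ f₂ = 0 := by simpa using ht =≫ biprod.fst
    have hty : t ≫ y = 0 := by simpa using ht =≫ biprod.snd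
    obtain ⟨u, hu₁, hu₂⟩ := h.exists_lift t 0 (by simp [hty])
    have hu : u = 0 := zero_of_comp_mono (biprod.lift (f₁ ≫ f₂) x) <| by
      ext <;> simp [reassoc_of% hu₁, hu₂, ht₂]
    rw [← hu₁, hu, zero_comp]

lemma IsPushout.epi_biprod_desc_of_comp {f₂ : Y ⟶ Z} {y : Y ⟶ Y'} {z : Z ⟶ Z'}
    {f₁' : X' ⟶ Y'} {f₂' : Y' ⟶ Z'} (h : IsPushout f₂ y z f₂')
    [Epi (biprod.desc z (-(f₁' ≫ f₂')))] : Epi (biprod.desc y (-f₁')) :=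
  Preadditive.epi_of_cancel_zero _ fun t ht => by
    have hyt : y ≫ t = 0 := by simpa using biprod.inl ≫= ht
    have ht₁ : f₁' ≫ t = 0 := by simpa using biprod.inr ≫= ht
    obtain ⟨u, hu₁, hu₂⟩ := h.exists_desc 0 t (by simp [hyt])
    have hu : u = 0 := zero_of_epi_comp (biprod.desc z (-(f₁' ≫ f₂'))) <| by
      ext <;> simp [hu₁, hu₂, ht₁]
    rw [← hu₂, hu, comp_zero]

end Preadditive

section Abelian

variable {C : Type*} [Category* C] [Abelian C] {W X Y Z : C}
  {f : W ⟶ X} {g : W ⟶ Y} {h : X ⟶ Z} {k : Y ⟶ Z}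

lemma CommSq.isPullback_iff_exact_and_mono (sq : CommSq f g h k) :
    IsPullback f g h k ↔ sq.shortComplex'.Exact ∧ Mono (biprod.lift f g) := by
  rw [show Mono (biprod.lift f g) ↔ Mono sq.shortComplex'.f from Iff.rfl,
    ShortComplex.exact_and_mono_f_iff_f_is_kernel]
  exact ⟨fun hp => ⟨hp.isLimitKernelFork⟩,
    fun ⟨hl⟩ => .of_isLimit' sq (sq.isLimitEquivIsLimitKernelFork.symm hl)⟩

lemma CommSq.isPushout_iff_exact_and_epi_s15 (sq : CommSq f g h k) :
    IsPushout f g h k ↔ sq.shortComplex'.Exact ∧ Epi (biprod.desc h (-k)) := by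
  rw [show Epi (biprod.desc h (-k)) ↔ Epi sq.shortComplex'.g from Iff.rfl,
    ← ShortComplex.exact_and_epi_g_iff_of_iso sq.shortComplexIsoShortComplex',
    ShortComplex.exact_and_epi_g_iff_g_is_cokernel]
  exact ⟨fun hp => ⟨hp.isColimitCokernelCofork⟩,
    fun ⟨hc⟩ => .of_isColimit' sq (sq.isColimitEquivIsColimitCokernelCofork.symm hc)⟩

lemma IsPushout.epi_biprod_desc (hp : IsPushout f g h k) : Epi (biprod.desc h (-k)) :=
  (hp.toCommSq.isPushout_iff_exact_and_epi_s15.1 hp).2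

lemma IsPushout.isPullback_of_mono_biprod_lift (hp : IsPushout f g h k)
    [Mono (biprod.lift f g)] : IsPullback f g h k :=
  hp.toCommSq.isPullback_iff_exact_and_mono.2
    ⟨(hp.toCommSq.isPushout_iff_exact_and_epi_s15.1 hp).1, ‹_›⟩

lemma IsPullback.isPushout_of_epi_biprod_desc (hp : IsPullback f g h k)
    [Epi (biprod.desc h (-k))] : IsPushout f g h k :=
  hp.toCommSq.isPushout_iff_exact_and_epi_s15.2
    ⟨(hp.toCommSq.isPullback_iff_exact_and_mono.1 hp).1, ‹_›⟩

end Abelian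

end CategoryTheory

lemma isSquareQuad_iff_isPullback_and_isPushout {C : Type*} [Category C] [Abelian C]
    {W X Y Z : C} {f : W ⟶ X} {g : W ⟶ Y} {h : X ⟶ Z} {k : Y ⟶ Z} (w : f ≫ h = g ≫ k) :
    IsSquareQuad f g h k ↔ IsPullback f g h k ∧ IsPushout f g h k := by
  have sq : CommSq f g h k := ⟨w⟩
  have hweak : IsWeakSquare f g h k ↔ sq.shortComplex'.Exact :=
    ⟨fun ⟨_, hex⟩ => hex, fun hex => ⟨sq.shortComplex'.zero, hex⟩⟩
  rw [sq.isPullback_iff_exact_and_mono, sq.isPushout_iff_exact_and_epi_s15, IsSquareQuad, hweak]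
  tauto

/-- Two-out-of-three for squares: if two of the left quadrangle `(f₁, x, y, f₁')`, the right
quadrangle `(f₂, y, z, f₂')` and the outer quadrangle `(f₁ ≫ f₂, x, z, f₁' ≫ f₂')` are
squares, then so is the third. -/
theorem square_two_out_of_three {A : Type*} [Category A] [Abelian A]
    {X Y Z X' Y' Z' : A}
    (f₁ : X ⟶ Y) (f₂ : Y ⟶ Z) (x : X ⟶ X') (y : Y ⟶ Y') (z : Z ⟶ Z')
    (f₁' : X' ⟶ Y') (f₂' : Y' ⟶ Z')
    (comm₁ : f₁ ≫ y = x ≫ f₁') (comm₂ : f₂ ≫ z = y ≫ f₂') :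
    (IsSquareQuad f₁ x y f₁' → IsSquareQuad f₂ y z f₂' →
       IsSquareQuad (f₁ ≫ f₂) x z (f₁' ≫ f₂')) ∧
    (IsSquareQuad f₁ x y f₁' → IsSquareQuad (f₁ ≫ f₂) x z (f₁' ≫ f₂') →
       IsSquareQuad f₂ y z f₂') ∧
    (IsSquareQuad f₂ y z f₂' → IsSquareQuad (f₁ ≫ f₂) x z (f₁' ≫ f₂') →
       IsSquareQuad f₁ x y f₁') := by
  have comm : (f₁ ≫ f₂) ≫ z = x ≫ f₁' ≫ f₂' := by
    rw [Category.assoc, comm₂, reassoc_of% comm₁]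
  simp only [isSquareQuad_iff_isPullback_and_isPushout, comm₁, comm₂, comm]
  refine ⟨fun ⟨pb₁, po₁⟩ ⟨pb₂, po₂⟩ => ⟨pb₁.paste_horiz pb₂, po₁.paste_horiz po₂⟩, ?_, ?_⟩
  · rintro ⟨pb₁, po₁⟩ ⟨pb, po⟩
    have po₂ : IsPushout f₂ y z f₂' := po.of_left comm₂ po₁
    have : Mono (biprod.lift (f₁ ≫ f₂) x) := pb.mono_shortComplex'_f
    have : Mono (biprod.lift f₂ y) := pb₁.mono_biprod_lift_of_comp
    exact ⟨po₂.isPullback_of_mono_biprod_lift, po₂⟩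
  · rintro ⟨pb₂, po₂⟩ ⟨pb, po⟩
    have pb₁ : IsPullback f₁ x y f₁' := pb.of_right comm₁ pb₂
    have : Epi (biprod.desc z (-(f₁' ≫ f₂'))) := po.epi_biprod_desc
    have : Epi (biprod.desc y (-f₁')) := po₂.epi_biprod_desc_of_comp
    exact ⟨pb₁, pb₁.isPushout_of_epi_biprod_desc⟩
end

section
/- Let C be a weakly abelian category and let f : X ⟶ Y and g : Y ⟶ Z be morphisms in C. Then f is a weak kernel of g if and only if g is a weak cokernel of f. -/
open CategoryTheory CategoryTheory.Limits

/-- `i : K ⟶ X` is a *weak kernel* of `f : X ⟶ Y` if `i ≫ f = 0` and every `t : T ⟶ X` with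
`t ≫ f = 0` factors through `i`. -/
def IsWeakKernel {C : Type*} [Category C] [HasZeroMorphisms C]
    {K X Y : C} (i : K ⟶ X) (f : X ⟶ Y) : Prop :=
  i ≫ f = 0 ∧ ∀ ⦃T : C⦄ (t : T ⟶ X), t ≫ f = 0 → ∃ t' : T ⟶ K, t' ≫ i = t

/-- `p : Y ⟶ Q` is a *weak cokernel* of `f : X ⟶ Y` if `f ≫ p = 0` and every `s : Y ⟶ T` with
`f ≫ s = 0` factors through `p`. -/
def IsWeakCokernel {C : Type*} [Category C] [HasZeroMorphisms C]
    {X Y Q : C} (f : X ⟶ Y) (p : Y ⟶ Q) : Prop :=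
  f ≫ p = 0 ∧ ∀ ⦃T : C⦄ (s : Y ⟶ T), f ≫ s = 0 → ∃ s' : Q ⟶ T, p ≫ s' = s

/-- An additive category is *weakly abelian* if every morphism has a weak kernel and a weak
cokernel, and every morphism is a weak kernel of some morphism and a weak cokernel of some
morphism. -/
def WeaklyAbelian (C : Type*) [Category C] [Preadditive C] [HasZeroObject C]
    [HasFiniteBiproducts C] : Prop :=
  (∀ ⦃X Y : C⦄ (f : X ⟶ Y), ∃ (K : C) (i : K ⟶ X), IsWeakKernel i f) ∧
  (∀ ⦃X Y : C⦄ (f : X ⟶ Y), ∃ (Q : C) (p : Y ⟶ Q), IsWeakCokernel f p) ∧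
  (∀ ⦃X Y : C⦄ (f : X ⟶ Y), ∃ (Z : C) (g : Y ⟶ Z), IsWeakKernel f g) ∧
  (∀ ⦃X Y : C⦄ (f : X ⟶ Y), ∃ (W : C) (e : W ⟶ X), IsWeakCokernel e f)

/-! If `g` is the weak cokernel of some `h`, then `h ≫ g = 0` makes `h` factor through any weak
kernel `f` of `g`, so every morphism killed by `f` is killed by `h` and hence factors through `g`.
The converse is dual, using that `f` is the weak kernel of some `m`. -/

section

variable {C : Type*} [Category C] [HasZeroMorphisms C]

theorem IsWeakKernel.isWeakCokernel_of_isWeakCokernel {W X Y Z : C} {f : X ⟶ Y} {g : Y ⟶ Z}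
    {h : W ⟶ Y} (hf : IsWeakKernel f g) (hh : IsWeakCokernel h g) : IsWeakCokernel f g := by
  obtain ⟨k, hk⟩ := hf.2 h hh.1
  refine ⟨hf.1, fun T s hs => hh.2 s ?_⟩
  rw [← hk, Category.assoc, hs, comp_zero]

theorem IsWeakCokernel.isWeakKernel_of_isWeakKernel {X Y Z V : C} {f : X ⟶ Y} {g : Y ⟶ Z}
    {m : Y ⟶ V} (hg : IsWeakCokernel f g) (hm : IsWeakKernel f m) : IsWeakKernel f g := by
  obtain ⟨k, hk⟩ := hg.2 m hm.1
  refine ⟨hg.1, fun T t ht => hm.2 t ?_⟩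
  rw [← hk, ← Category.assoc, ht, zero_comp]

end

/-- In a weakly abelian category, `f` is a weak kernel of `g` if and only if `g` is a weak
cokernel of `f`. -/
theorem isWeakKernel_iff_isWeakCokernel {C : Type*} [Category C] [Preadditive C]
    [HasZeroObject C] [HasFiniteBiproducts C] (hC : WeaklyAbelian C)
    {X Y Z : C} (f : X ⟶ Y) (g : Y ⟶ Z) :
    IsWeakKernel f g ↔ IsWeakCokernel f g := by
  obtain ⟨-, -, isWeakKernel_of, isWeakCokernel_of⟩ := hC
  obtain ⟨W, h, hh⟩ := isWeakCokernel_of g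
  obtain ⟨V, m, hm⟩ := isWeakKernel_of f
  exact ⟨fun hf => hf.isWeakCokernel_of_isWeakCokernel hh,
    fun hg => hg.isWeakKernel_of_isWeakKernel hm⟩
end

section
/- Let C be a weakly abelian category. A morphism f : X ⟶ Y in C is a monomorphism if and only if it is a split monomorphism, i.e., there exists r : Y ⟶ X with f ≫ r = 𝟙 X. -/
open CategoryTheory CategoryTheory.Limits

/-- Since `e ≫ f = 0 = 0 ≫ f`, a monomorphism `f` forces `e = 0`; then `𝟙 X` factors through `f`. -/
theorem IsWeakCokernel.exists_retraction_of_mono {C : Type*} [Category C] [HasZeroMorphisms C]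
    {W X Y : C} {e : W ⟶ X} {f : X ⟶ Y} (h : IsWeakCokernel e f) [Mono f] :
    ∃ r : Y ⟶ X, f ≫ r = 𝟙 X := by
  have he : e = 0 := by rw [← cancel_mono f, h.1, zero_comp]
  exact h.2 (𝟙 X) (by rw [he, zero_comp])

/-- In a weakly abelian category, a morphism is a monomorphism if and only if it is a split
monomorphism. -/
theorem mono_iff_splitMono {C : Type*} [Category C] [Preadditive C]
    [HasZeroObject C] [HasFiniteBiproducts C] (hC : WeaklyAbelian C)
    {X Y : C} (f : X ⟶ Y) :
    Mono f ↔ ∃ r : Y ⟶ X, f ≫ r = 𝟙 X := by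
  refine ⟨fun _ => ?_, fun ⟨r, hr⟩ => mono_of_mono_fac hr⟩
  obtain ⟨_, _, hf⟩ := hC.2.2.2 f
  exact hf.exists_retraction_of_mono
end
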